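/- arXiv:1702.05342 — 2 statements merged into one kernel-verified Lean document; each statement's English description precedes it below -/
import Mathlib

section
/- If (S,π) is a ⊕-semigroup, then S equipped with the operators induced by π satisfies axioms (A1)–(A4), i.e., is a ⊕-algebra. Similarly, if (S,π) is a ◦-monoid, then S equipped with the induced operators together with 1 = π(ε) satisfies axioms (A1)–(A5), i.e., is a ◦-algebra. -/
/-- A countable word over the alphabet `A`: a countable linearly ordered domain
together with a labelling of its positions by letters of `A`.
Words are compared up to isomorphism via `CWord.Iso`. -/
structure CWord (A : Type) : Type 1 where
  carrier : Type
  ord : LinearOrder carrier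
  cnt : Countable carrier
  label : carrier → A

attribute [instance] CWord.ord CWord.cnt

namespace CWord

variable {A : Type}

/-- Isomorphism of words: an order-preserving bijection of the domains
commuting with the labellings. -/
def Iso (u v : CWord A) : Prop :=
  ∃ e : u.carrier ≃o v.carrier, ∀ x, v.label (e x) = u.label x

/-- The word with domain `ι` and labelling `f`. -/
def ofFun {ι : Type} [LinearOrder ι] [Countable ι] (f : ι → A) : CWord A :=
  ⟨ι, inferInstance, inferInstance, f⟩

/-- The one-letter word. -/
def single (a : A) : CWord A := ofFun (fun _ : Fin 1 => a)

/-- The empty word `ε`. -/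
def epsilon : CWord A := ofFun (fun x : Fin 0 => (x.elim0 : A))

/-- The generalized product `∏_{i ∈ ι} u i`: the word whose domain is the
lexicographic sum of the domains of the `u i`, with the inherited labels. -/
def prod {ι : Type} [LinearOrder ι] [Countable ι] (u : ι → CWord A) : CWord A :=
  ⟨Lex ((i : ι) × (u i).carrier), inferInstance,
    inferInstanceAs (Countable ((i : ι) × (u i).carrier)),
    fun x => (u (ofLex x).1).label (ofLex x).2⟩

/-- Concatenation of two words. -/
def concat (u v : CWord A) : CWord A := prod (fun b : Bool => cond b v u)

/-- The ω-power of a word. -/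
def omegaPow (u : CWord A) : CWord A := prod (fun _ : ℕ => u)

instance : Countable ℕᵒᵈ := inferInstanceAs (Countable ℕ)

/-- The ω*-power of a word. -/
def omegaStarPow (u : CWord A) : CWord A := prod (fun _ : ℕᵒᵈ => u)

/-- The `(n+1)`-st power of a word. -/
def nPowSucc (u : CWord A) (n : ℕ) : CWord A := prod (fun _ : Fin (n + 1) => u)

/-- `w` is an η-shuffle of the set of letters `P`: its domain has order
type η and every letter of `P` (and no other letter) occurs on a dense
set of positions. -/
def IsEtaWord {S : Type} (P : Set S) (w : CWord S) : Prop :=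
  Nonempty w.carrier ∧ DenselyOrdered w.carrier ∧ NoMinOrder w.carrier ∧
    NoMaxOrder w.carrier ∧ (∀ x, w.label x ∈ P) ∧
    ∀ a ∈ P, ∀ x y : w.carrier, x < y → ∃ z, x < z ∧ z < y ∧ w.label z = a

/-- `π` is a generalized product on the nonempty countable words over `S`,
i.e. `(S, π)` is a ⊕-semigroup: `π` is isomorphism-invariant, maps a
one-letter word to its letter and satisfies generalized associativity.
(`π` is modelled as a total function; only its values on nonempty words
are relevant.) -/
def IsPlusProd {S : Type} (π : CWord S → S) : Prop :=
  (∀ u v : CWord S, Nonempty u.carrier → Iso u v → π u = π v) ∧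
  (∀ a : S, π (single a) = a) ∧
  ∀ (ι : Type) [LinearOrder ι] [Countable ι] [Nonempty ι] (u : ι → CWord S),
    (∀ i, Nonempty (u i).carrier) → π (ofFun fun i => π (u i)) = π (prod u)

/-- `π` is a generalized product on all countable words over `M`,
i.e. `(M, π)` is a ◦-monoid. -/
def IsOProd {M : Type} (π : CWord M → M) : Prop :=
  (∀ u v : CWord M, Iso u v → π u = π v) ∧
  (∀ a : M, π (single a) = a) ∧
  ∀ (ι : Type) [LinearOrder ι] [Countable ι] (u : ι → CWord M),
    π (ofFun fun i => π (u i)) = π (prod u)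

end CWord
/-- `sPow mul a n = a^(n+1)`: iterated product of `a` with itself. -/
def sPow {S : Type} (mul : S → S → S) (a : S) : ℕ → S
  | 0 => a
  | n + 1 => mul a (sPow mul a n)

/-- Axioms (A1)–(A4) of a ⊕-algebra `(S, ·, τ, τ*, κ)`. -/
def PlusAlgAxioms {S : Type} (mul : S → S → S) (tau taustar : S → S)
    (kappa : Set S → S) : Prop :=
  -- (A1) associativity
  (∀ a b c : S, mul (mul a b) c = mul a (mul b c)) ∧
  -- (A2) τ is compatible to the right
  (∀ a b : S, tau (mul a b) = mul a (tau (mul b a))) ∧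
  (∀ (a : S) (n : ℕ), tau (sPow mul a n) = tau a) ∧
  -- (A3) τ* is compatible to the left
  (∀ a b : S, taustar (mul b a) = mul (taustar (mul a b)) a) ∧
  (∀ (a : S) (n : ℕ), taustar (sPow mul a n) = taustar a) ∧
  -- (A4) κ is compatible with shuffles
  ∀ P : Set S, P.Nonempty → ∀ c ∈ P, ∀ P' ⊆ P, ∀ P'' : Set S, P''.Nonempty →
    P'' ⊆ {x | x = kappa P ∨ (∃ a ∈ P, x = mul a (kappa P)) ∨
                (∃ b ∈ P, x = mul (kappa P) b) ∨
                (∃ a ∈ P, ∃ b ∈ P, x = mul (mul a (kappa P)) b)} →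
      kappa P = mul (kappa P) (kappa P) ∧
      kappa P = mul (kappa P) (mul c (kappa P)) ∧
      kappa P = tau (kappa P) ∧
      kappa P = tau (mul (kappa P) c) ∧
      kappa P = taustar (kappa P) ∧
      kappa P = taustar (mul c (kappa P)) ∧
      kappa P = kappa (P' ∪ P'')

/-- Axioms (A1)–(A5) of a ◦-algebra `(S, 1, ·, τ, τ*, κ)`. -/
def OAlgAxioms {S : Type} (one : S) (mul : S → S → S) (tau taustar : S → S)
    (kappa : Set S → S) : Prop :=
  PlusAlgAxioms mul tau taustar kappa ∧
  -- (A5)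
  (∀ x : S, mul x one = x) ∧ (∀ x : S, mul one x = x) ∧
  tau one = one ∧ taustar one = one ∧ kappa {one} = one ∧
  ∀ P : Set S, P.Nonempty → kappa (P ∪ {one}) = kappa P

/-- The operators `·, τ, τ*, κ` are the ones induced by the generalized
product `π`: `a · b = π(ab)`, `a^τ = π(a^ω)`, `a^{τ*} = π(a^{ω*})` and
`P^κ = π(P^η)` for every nonempty `P ⊆ S`. -/
def InducedByProd {S : Type} (π : CWord S → S) (mul : S → S → S)
    (tau taustar : S → S) (kappa : Set S → S) : Prop :=
  (∀ a b : S, mul a b = π (CWord.ofFun (fun x : Bool => cond x b a))) ∧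
  (∀ a : S, tau a = π (CWord.ofFun (fun _ : ℕ => a))) ∧
  (∀ a : S, taustar a = π (CWord.ofFun (fun _ : ℕᵒᵈ => a))) ∧
  (∀ P : Set S, P.Nonempty → ∃ w : CWord S, CWord.IsEtaWord P w ∧ kappa P = π w)

/-!
Each identity is proved by writing both sides as `π` of a single word and exhibiting an
isomorphism between the two words; generalized associativity and isomorphism invariance do the
rest. For (A1) and (A2) these are finite words and `ω`-words of letters, regrouped into blocks.

For (A4), call a word `P`-dense if its letters lie in `P` and every letter of `P` occurs between
any two of its positions. The gluings that occur (`w w`, `w c w`, `w^ω`, `(w c)^ω`, and the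
substitution of `w`, `a w`, `w b` or `a w b` for the letters of an η-word over `P' ∪ P''`) are
`P`-dense, nonempty and without endpoints, i.e. η-words over `P`; and any two η-words over `P`
are isomorphic by a back-and-forth argument that also matches labels.

Reading words backwards turns `π` into a generalized product whose binary product is the
opposite one and whose `τ` is the `τ*` of `π`, so (A3) and the `τ*`-parts of (A4) are (A2) and
the `τ`-parts of (A4) for the reversed product. For a ◦-monoid, erasing the letters equal to
`π ε` does not change the value of a word, which gives (A5).
-/

instance OrderDual.countable {α : Type*} [h : Countable α] : Countable αᵒᵈ := h

noncomputable def natSigmaFinOrderIso (n : ℕ) : (Σₗ _ : ℕ, Fin (n + 1)) ≃o ℕ :=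
  StrictMono.orderIsoOfSurjective (fun p => (ofLex p).1 * (n + 1) + (ofLex p).2)
    (by
      rintro p q (@⟨m, m', k, k', h⟩ | @⟨m, k, k', h⟩)
      · show m * (n + 1) + k < m' * (n + 1) + k'
        have : (m + 1) * (n + 1) ≤ m' * (n + 1) := Nat.mul_le_mul_right _ h
        nlinarith [k.2]
      · exact Nat.add_lt_add_left h _)
    (fun c => ⟨toLex ⟨c / (n + 1), ⟨c % (n + 1), Nat.mod_lt _ n.succ_pos⟩⟩, Nat.div_add_mod' c _⟩)

@[simp]
theorem natSigmaFinOrderIso_apply (n m : ℕ) (k : Fin (n + 1)) :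
    natSigmaFinOrderIso n (toLex ⟨m, k⟩) = m * (n + 1) + k :=
  rfl

theorem sPow_succ' {S : Type} {mul : S → S → S}
    (hmul : ∀ a b c, mul (mul a b) c = mul a (mul b c)) (a : S) :
    ∀ n, sPow mul a (n + 1) = mul (sPow mul a n) a
  | 0 => rfl
  | n + 1 => by
    show mul a (sPow mul a (n + 1)) = mul (mul a (sPow mul a n)) a
    rw [sPow_succ' hmul a n, hmul]

theorem sPow_swap {S : Type} {mul : S → S → S}
    (hmul : ∀ a b c, mul (mul a b) c = mul a (mul b c)) (a : S) :
    ∀ n, sPow (fun x y => mul y x) a n = sPow mul a n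
  | 0 => rfl
  | n + 1 => (congrArg (mul · a) (sPow_swap hmul a n)).trans (sPow_succ' hmul a n).symm

namespace CWord

open OrderDual

section Words

variable {A : Type}

theorem Iso.of_strictMono {u v : CWord A} (f : u.carrier → v.carrier) (hf : StrictMono f)
    (hs : Function.Surjective f) (hl : ∀ x, v.label (f x) = u.label x) : Iso u v :=
  ⟨hf.orderIsoOfSurjective f hs, hl⟩

instance (a : A) : Nonempty (single a).carrier :=
  ⟨(0 : Fin 1)⟩

theorem concat_ofFun_fin_iso {m n : ℕ} (f : Fin (m + n) → A) :
    Iso (concat (ofFun (f ∘ Fin.castAdd n)) (ofFun (f ∘ Fin.natAdd m))) (ofFun f) := by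
  refine Iso.of_strictMono (fun p => match p with
    | ⟨false, i⟩ => Fin.castAdd n i
    | ⟨true, j⟩ => Fin.natAdd m j) ?_ ?_ ?_
  · rintro p q (@⟨b, b', i, j, hb⟩ | @⟨b, i, j, hij⟩)
    · obtain ⟨rfl, rfl⟩ := Bool.lt_iff.1 hb
      exact Nat.lt_of_lt_of_le (i : Fin m).2 (Nat.le_add_right _ _)
    · cases b
      · exact hij
      · exact Nat.add_lt_add_left hij m
  · refine Fin.addCases (fun i => ?_) (fun j => ?_)
    · exact ⟨toLex ⟨false, i⟩, rfl⟩
    · exact ⟨toLex ⟨true, j⟩, rfl⟩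
  · rintro ⟨_ | _, i⟩ <;> rfl

theorem concat_single_ofFun_nat_iso (f : ℕ → A) :
    Iso (concat (single (f 0)) (ofFun (f ∘ Nat.succ))) (ofFun f) := by
  refine Iso.of_strictMono (fun p => match p with
    | ⟨false, _⟩ => (0 : ℕ)
    | ⟨true, n⟩ => Nat.succ n) ?_ ?_ ?_
  · rintro p q (@⟨b, b', i, j, hb⟩ | @⟨b, i, j, hij⟩)
    · obtain ⟨rfl, rfl⟩ := Bool.lt_iff.1 hb
      exact Nat.succ_pos _
    · cases b
      · exact absurd hij (Subsingleton.elim (α := Fin 1) i j ▸ lt_irrefl i)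
      · exact Nat.succ_lt_succ hij
  · rintro (_ | n)
    · exact ⟨toLex ⟨false, (0 : Fin 1)⟩, rfl⟩
    · exact ⟨toLex ⟨true, n⟩, rfl⟩
  · rintro ⟨_ | _, i⟩ <;> rfl

theorem range_label_subset_concat_left (u v : CWord A) :
    Set.range u.label ⊆ Set.range (concat u v).label :=
  fun _ ⟨z, hz⟩ => ⟨toLex ⟨false, z⟩, hz⟩

theorem range_label_subset_concat_right (u v : CWord A) :
    Set.range v.label ⊆ Set.range (concat u v).label :=
  fun _ ⟨z, hz⟩ => ⟨toLex ⟨true, z⟩, hz⟩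

def reverse (u : CWord A) : CWord A :=
  ⟨u.carrierᵒᵈ, inferInstance, inferInstance, fun x => u.label (ofDual x)⟩

theorem Iso.reverse {u v : CWord A} (h : Iso u v) : Iso u.reverse v.reverse :=
  ⟨h.choose.dual, fun x => h.choose_spec (ofDual x)⟩

theorem prod_reverse_iso {ι : Type} [LinearOrder ι] [Countable ι] (v : ι → CWord A) :
    Iso (prod fun i : ιᵒᵈ => (v (ofDual i)).reverse) (prod v).reverse := by
  refine Iso.of_strictMono (fun p => toDual (toLex ⟨ofDual (ofLex p).1, ofDual (ofLex p).2⟩))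
    ?_ (fun p => ⟨toLex ⟨toDual (ofLex (ofDual p)).1, toDual (ofLex (ofDual p)).2⟩, rfl⟩)
    fun _ => rfl
  rintro p q (@⟨i, j, x, y, h⟩ | @⟨i, x, y, h⟩)
  · exact Sigma.Lex.left _ _ h
  · exact Sigma.Lex.right _ _ h

def restrict (w : CWord A) (Q : w.carrier → Prop) : CWord A :=
  ofFun fun z : {z // Q z} => w.label z

end Words

section EtaWords

variable {S : Type} {P : Set S}

def IsDenseOver (P : Set S) (w : CWord S) : Prop :=
  (∀ x, w.label x ∈ P) ∧ ∀ a ∈ P, ∀ x y : w.carrier, x < y → ∃ z, x < z ∧ z < y ∧ w.label z = a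

theorem IsEtaWord.isDenseOver {w : CWord S} (h : IsEtaWord P w) : IsDenseOver P w :=
  h.2.2.2.2

theorem IsEtaWord.label_mem {w : CWord S} (h : IsEtaWord P w) (x : w.carrier) : w.label x ∈ P :=
  h.2.2.2.2.1 x

theorem IsEtaWord.exists_label {w : CWord S} (h : IsEtaWord P w) {a : S} (ha : a ∈ P) :
    ∃ z, w.label z = a := by
  obtain ⟨hne, -, -, hmax, -, hbetween⟩ := h
  obtain ⟨y, hy⟩ := exists_gt hne.some
  obtain ⟨z, -, -, hz⟩ := hbetween a ha _ y hy
  exact ⟨z, hz⟩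

namespace IsDenseOver

variable {w : CWord S}

theorem isEtaWord (h : IsDenseOver P w) [Nonempty w.carrier] [NoMinOrder w.carrier]
    [NoMaxOrder w.carrier] : IsEtaWord P w := by
  refine ⟨inferInstance, ⟨fun x y hxy => ?_⟩, inferInstance, inferInstance, h⟩
  obtain ⟨z, hxz, hzy, -⟩ := h.2 _ (h.1 x) x y hxy
  exact ⟨z, hxz, hzy⟩

theorem exists_gt (h : IsDenseOver P w) [NoMaxOrder w.carrier] {a : S} (ha : a ∈ P)
    (x : w.carrier) : ∃ z, x < z ∧ w.label z = a := by
  obtain ⟨y, hy⟩ := NoMaxOrder.exists_gt x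
  obtain ⟨z, hxz, -, hz⟩ := h.2 a ha x y hy
  exact ⟨z, hxz, hz⟩

theorem exists_lt (h : IsDenseOver P w) [NoMinOrder w.carrier] {a : S} (ha : a ∈ P)
    (x : w.carrier) : ∃ z, z < x ∧ w.label z = a := by
  obtain ⟨y, hy⟩ := NoMinOrder.exists_lt x
  obtain ⟨z, -, hzx, hz⟩ := h.2 a ha y x hy
  exact ⟨z, hzx, hz⟩

theorem single {a : S} (ha : a ∈ P) : IsDenseOver P (single a) :=
  ⟨fun _ => ha, fun _ _ x y hxy => absurd hxy (Subsingleton.elim (α := Fin 1) x y ▸ lt_irrefl x)⟩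

theorem prod {ι : Type} [LinearOrder ι] [Countable ι] {v : ι → CWord S}
    (hv : ∀ i, IsDenseOver P (v i))
    (hgap : ∀ i j, i < j → (∃ k, i < k ∧ k < j ∧ P ⊆ Set.range (v k).label) ∨
      NoMaxOrder (v i).carrier ∨ NoMinOrder (v j).carrier) :
    IsDenseOver P (prod v) := by
  refine ⟨fun p => (hv _).1 _, fun a ha p q hpq => ?_⟩
  rcases hpq with @⟨i, j, x, y, hij⟩ | @⟨i, x, y, hxy⟩
  · rcases hgap i j hij with ⟨k, hik, hkj, hk⟩ | hmax | hmin
    · obtain ⟨z, hz⟩ := hk ha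
      exact ⟨toLex ⟨k, z⟩, Sigma.Lex.left _ _ hik, Sigma.Lex.left _ _ hkj, hz⟩
    · obtain ⟨z, hxz, hz⟩ := (hv i).exists_gt ha x
      exact ⟨toLex ⟨i, z⟩, Sigma.Lex.right _ _ hxz, Sigma.Lex.left _ _ hij, hz⟩
    · obtain ⟨z, hzy, hz⟩ := (hv j).exists_lt ha y
      exact ⟨toLex ⟨j, z⟩, Sigma.Lex.left _ _ hij, Sigma.Lex.right _ _ hzy, hz⟩
  · obtain ⟨z, hxz, hzy, hz⟩ := (hv i).2 a ha x y hxy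
    exact ⟨toLex ⟨i, z⟩, Sigma.Lex.right _ _ hxz, Sigma.Lex.right _ _ hzy, hz⟩

theorem concat {u v : CWord S} (hu : IsDenseOver P u) (hv : IsDenseOver P v)
    (h : NoMaxOrder u.carrier ∨ NoMinOrder v.carrier) : IsDenseOver P (concat u v) := by
  refine prod (fun b => by cases b <;> assumption) fun i j hij => Or.inr ?_
  obtain ⟨rfl, rfl⟩ := Bool.lt_iff.1 hij
  exact h

theorem omegaPow {u : CWord S} (hu : IsDenseOver P u) [NoMinOrder u.carrier] :
    IsDenseOver P (omegaPow u) :=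
  prod (fun _ => hu) fun _ _ _ => Or.inr (Or.inr inferInstance)

end IsDenseOver

section Endpoints

variable {ι : Type} [LinearOrder ι] [Countable ι] {v : ι → CWord S}

theorem noMaxOrder_prod
    (h : ∀ i, (∃ j, i < j ∧ Nonempty (v j).carrier) ∨ NoMaxOrder (v i).carrier) :
    NoMaxOrder (prod v).carrier := by
  refine ⟨fun ⟨i, x⟩ => ?_⟩
  rcases h i with ⟨j, hij, ⟨y⟩⟩ | hmax
  · exact ⟨toLex ⟨j, y⟩, Sigma.Lex.left _ _ hij⟩
  · obtain ⟨y, hy⟩ := exists_gt x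
    exact ⟨toLex ⟨i, y⟩, Sigma.Lex.right _ _ hy⟩

theorem noMinOrder_prod
    (h : ∀ i, (∃ j, j < i ∧ Nonempty (v j).carrier) ∨ NoMinOrder (v i).carrier) :
    NoMinOrder (prod v).carrier := by
  refine ⟨fun ⟨i, x⟩ => ?_⟩
  rcases h i with ⟨j, hji, ⟨y⟩⟩ | hmin
  · exact ⟨toLex ⟨j, y⟩, Sigma.Lex.left _ _ hji⟩
  · obtain ⟨y, hy⟩ := exists_lt x
    exact ⟨toLex ⟨i, y⟩, Sigma.Lex.right _ _ hy⟩

variable {u w : CWord S}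

instance [h : Nonempty u.carrier] : Nonempty (concat u w).carrier :=
  ⟨toLex ⟨false, h.some⟩⟩

instance [Nonempty u.carrier] [NoMinOrder u.carrier] : NoMinOrder (concat u w).carrier :=
  noMinOrder_prod fun b => by
    cases b
    exacts [Or.inr ‹_›, Or.inl ⟨false, Bool.false_lt_true, ‹_›⟩]

instance [Nonempty w.carrier] [NoMaxOrder w.carrier] : NoMaxOrder (concat u w).carrier :=
  noMaxOrder_prod fun b => by
    cases b
    exacts [Or.inl ⟨true, Bool.false_lt_true, ‹_›⟩, Or.inr ‹_›]

instance [h : Nonempty u.carrier] : Nonempty (omegaPow u).carrier :=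
  ⟨toLex ⟨0, h.some⟩⟩

instance [Nonempty u.carrier] : NoMaxOrder (omegaPow u).carrier :=
  noMaxOrder_prod fun n => Or.inl ⟨n + 1, n.lt_succ_self, ‹_›⟩

instance [NoMinOrder u.carrier] : NoMinOrder (omegaPow u).carrier :=
  noMinOrder_prod fun _ => Or.inr ‹_›

end Endpoints

theorem IsEtaWord.reverse {w : CWord S} (h : IsEtaWord P w) : IsEtaWord P w.reverse := by
  obtain ⟨hne, hdense, hmin, hmax, hlabel, hbetween⟩ := h
  refine ⟨hne.map toDual, inferInstanceAs (DenselyOrdered w.carrierᵒᵈ),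
    inferInstanceAs (NoMinOrder w.carrierᵒᵈ), inferInstanceAs (NoMaxOrder w.carrierᵒᵈ),
    fun x => hlabel _, fun a ha x y hxy => ?_⟩
  obtain ⟨z, hyz, hzx, hz⟩ := hbetween a ha (ofDual y) (ofDual x) hxy
  exact ⟨toDual z, hzx, hyz, hz⟩

theorem IsEtaWord.restrict {Q : Set S} {w : CWord S} (h : IsEtaWord Q w) (hP : P.Nonempty)
    (hPQ : P ⊆ Q) : IsEtaWord P (w.restrict fun z => w.label z ∈ P) := by
  obtain ⟨p, hp⟩ := hP
  have ⟨_, _, _, _, _⟩ := h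
  have hdense := h.isDenseOver
  have : Nonempty (w.restrict fun z => w.label z ∈ P).carrier :=
    let ⟨z, hz⟩ := h.exists_label (hPQ hp); ⟨⟨z, show w.label z ∈ P from hz ▸ hp⟩⟩
  have : NoMinOrder (w.restrict fun z => w.label z ∈ P).carrier :=
    ⟨fun x => let ⟨z, hzx, hz⟩ := hdense.exists_lt (hPQ hp) x.1
      ⟨⟨z, show w.label z ∈ P from hz ▸ hp⟩, hzx⟩⟩
  have : NoMaxOrder (w.restrict fun z => w.label z ∈ P).carrier :=
    ⟨fun x => let ⟨z, hxz, hz⟩ := hdense.exists_gt (hPQ hp) x.1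
      ⟨⟨z, show w.label z ∈ P from hz ▸ hp⟩, hxz⟩⟩
  refine IsDenseOver.isEtaWord ⟨fun x => x.2, fun a ha x y hxy => ?_⟩
  obtain ⟨z, hxz, hzy, hz⟩ := hdense.2 a (hPQ ha) x.1 y.1 hxy
  exact ⟨⟨z, show w.label z ∈ P from hz ▸ ha⟩, hxz, hzy, hz⟩

theorem IsEtaWord.exists_label_between_finsets {v : CWord S} (hv : IsEtaWord P v) {c : S}
    (hc : c ∈ P) (lo hi : Finset v.carrier) (h : ∀ x ∈ lo, ∀ y ∈ hi, x < y) :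
    ∃ m, v.label m = c ∧ (∀ x ∈ lo, x < m) ∧ ∀ y ∈ hi, m < y := by
  obtain ⟨hne, hdense, hmin, hmax, -, hlabel⟩ := hv
  obtain ⟨m, hlo, hhi⟩ := Order.exists_between_finsets lo hi h
  obtain ⟨l, hlo', hl⟩ := Order.exists_between_finsets lo {m} (by simpa using hlo)
  obtain ⟨z, hlz, hzm, hz⟩ := hlabel c hc l m (hl m (Finset.mem_singleton_self m))
  exact ⟨z, hz, fun x hx => (hlo' x hx).trans hlz, fun y hy => hzm.trans (hhi y hy)⟩

abbrev LabelledPartialIso (u v : CWord S) : Type :=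
  {f : Finset (u.carrier × v.carrier) //
    (∀ p ∈ f, ∀ q ∈ f, cmp p.1 q.1 = cmp p.2 q.2) ∧ ∀ p ∈ f, v.label p.2 = u.label p.1}

namespace LabelledPartialIso

variable {u v : CWord S}

def swap (f : LabelledPartialIso u v) : LabelledPartialIso v u :=
  ⟨f.1.map (Equiv.prodComm _ _).toEmbedding, by
    refine ⟨?_, ?_⟩ <;> simp only [Finset.mem_map_equiv, Prod.forall]
    · exact fun a b hab c d hcd => (f.2.1 _ hab _ hcd).symm
    · exact fun a b hab => (f.2.2 _ hab).symm⟩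

theorem mem_swap {f : LabelledPartialIso u v} {a : u.carrier} {b : v.carrier} :
    (b, a) ∈ f.swap.1 ↔ (a, b) ∈ f.1 := by
  simp [swap]

theorem swap_le_swap {f g : LabelledPartialIso u v} : f.swap ≤ g.swap ↔ f ≤ g := by
  simp [swap, ← Subtype.coe_le_coe, Finset.map_subset_map]

theorem swap_swap (f : LabelledPartialIso u v) : f.swap.swap = f := by
  ext; simp [swap]

theorem exists_extend (hv : IsEtaWord P v) (f : LabelledPartialIso u v) (a : u.carrier)
    (ha : u.label a ∈ P) : ∃ g, (∃ b, (a, b) ∈ g.1) ∧ f ≤ g := by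
  classical
  suffices ∃ b, v.label b = u.label a ∧ ∀ p ∈ f.1, cmp p.1 a = cmp p.2 b by
    obtain ⟨b, hb, hcmp⟩ := this
    refine ⟨⟨insert (a, b) f.1, ?_, ?_⟩, ⟨b, Finset.mem_insert_self _ _⟩, Finset.subset_insert _ _⟩
    · simp only [Finset.mem_insert]
      rintro p (rfl | hp) q (rfl | hq)
      · simp
      · rw [cmp_eq_cmp_symm, hcmp q hq]
      · exact hcmp p hp
      · exact f.2.1 p hp q hq
    · simp only [Finset.mem_insert]
      rintro p (rfl | hp)
      exacts [hb, f.2.2 p hp]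
  by_cases hdom : ∃ b, (a, b) ∈ f.1
  · obtain ⟨b, hab⟩ := hdom
    exact ⟨b, f.2.2 _ hab, fun p hp => f.2.1 p hp _ hab⟩
  push Not at hdom
  obtain ⟨b, hb, hlo, hhi⟩ := hv.exists_label_between_finsets ha
    ({p ∈ f.1 | p.1 < a}.image Prod.snd) ({p ∈ f.1 | a < p.1}.image Prod.snd) (by
      simp only [Finset.mem_image, Finset.mem_filter]
      rintro _ ⟨p, ⟨hp, hpa⟩, rfl⟩ _ ⟨q, ⟨hq, haq⟩, rfl⟩
      rw [← lt_iff_lt_of_cmp_eq_cmp (f.2.1 p hp q hq)]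
      exact hpa.trans haq)
  refine ⟨b, hb, fun p hp => ?_⟩
  rcases lt_or_gt_of_ne (fun h : p.1 = a => hdom p.2 (h ▸ hp)) with hpa | hap
  · rw [(cmp_eq_lt_iff _ _).2 hpa, (cmp_eq_lt_iff _ _).2
      (hlo _ (Finset.mem_image_of_mem _ (Finset.mem_filter.2 ⟨hp, hpa⟩)))]
  · rw [(cmp_eq_gt_iff _ _).2 hap, (cmp_eq_gt_iff _ _).2
      (hhi _ (Finset.mem_image_of_mem _ (Finset.mem_filter.2 ⟨hp, hap⟩)))]

end LabelledPartialIso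

theorem IsEtaWord.iso {u v : CWord S} (hu : IsEtaWord P u) (hv : IsEtaWord P v) : Iso u v := by
  classical
  cases nonempty_encodable u.carrier
  cases nonempty_encodable v.carrier
  let 𝒟 : u.carrier ⊕ v.carrier → Order.Cofinal (LabelledPartialIso u v)
    | .inl a => ⟨{f | ∃ b, (a, b) ∈ f.1}, fun f =>
        LabelledPartialIso.exists_extend hv f a (hu.label_mem a)⟩
    | .inr b => ⟨{f | ∃ a, (a, b) ∈ f.1}, fun f => by
        obtain ⟨g, ⟨a, hba⟩, hfg⟩ := LabelledPartialIso.exists_extend hu f.swap b (hv.label_mem b)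
        refine ⟨g.swap, ⟨a, LabelledPartialIso.mem_swap.2 hba⟩, ?_⟩
        rwa [← LabelledPartialIso.swap_le_swap, LabelledPartialIso.swap_swap]⟩
  let I := Order.idealOfCofinals ⟨∅, by simp, by simp⟩ 𝒟
  have hF : ∀ a, ∃ b, ∃ f ∈ I, (a, b) ∈ f.1 := fun a => by
    obtain ⟨f, ⟨b, hb⟩, hf⟩ := Order.cofinal_meets_idealOfCofinals _ 𝒟 (.inl a)
    exact ⟨b, f, hf, hb⟩
  have hG : ∀ b, ∃ a, ∃ f ∈ I, (a, b) ∈ f.1 := fun b => by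
    obtain ⟨f, ⟨a, ha⟩, hf⟩ := Order.cofinal_meets_idealOfCofinals _ 𝒟 (.inr b)
    exact ⟨a, f, hf, ha⟩
  choose F f hfI hfF using hF
  choose G g hgI hgG using hG
  refine ⟨OrderIso.ofCmpEqCmp F G fun a b => ?_, fun a => (f a).2.2 _ (hfF a)⟩
  obtain ⟨m, -, hfm, hgm⟩ := I.directed _ (hfI a) _ (hgI b)
  exact m.2.1 _ (hfm (hfF a)) _ (hgm (hgG b))

end EtaWords

variable {S : Type} {π : CWord S → S} {P : Set S}

def inducedMul (π : CWord S → S) (a b : S) : S := π (ofFun fun x : Bool => cond x b a)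

def inducedTau (π : CWord S → S) (a : S) : S := π (ofFun fun _ : ℕ => a)

namespace IsPlusProd

variable (hp : IsPlusProd π)
include hp

theorem eq_of_isEtaWord {u v : CWord S} (hu : IsEtaWord P u) (hv : IsEtaWord P v) : π u = π v :=
  hp.1 u v hu.1 (hu.iso hv)

theorem ofFun_of_subsingleton {ι : Type} [LinearOrder ι] [Countable ι] [Subsingleton ι]
    (f : ι → S) (i : ι) : π (ofFun f) = f i := by
  rw [← hp.2.1 (f i)]
  refine hp.1 _ _ ⟨i⟩ (Iso.of_strictMono (fun _ => (0 : Fin 1)) ?_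
    (fun _ => ⟨i, Subsingleton.elim (α := Fin 1) _ _⟩) fun j => congrArg f (Subsingleton.elim i j))
  intro j k h
  exact absurd h (Subsingleton.elim (α := ι) j k ▸ lt_irrefl j)

theorem inducedMul_eq_concat {u v : CWord S} (hu : Nonempty u.carrier)
    (hv : Nonempty v.carrier) : inducedMul π (π u) (π v) = π (concat u v) := by
  have : (fun x : Bool => cond x (π v) (π u)) = fun x => π (cond x v u) := by
    funext x; cases x <;> rfl
  rw [inducedMul, this]
  exact hp.2.2 Bool _ fun x => by cases x <;> assumption

theorem inducedTau_eq_omegaPow {u : CWord S} (hu : Nonempty u.carrier) :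
    inducedTau π (π u) = π (omegaPow u) :=
  hp.2.2 ℕ (fun _ => u) fun _ => hu

theorem ofFun_blocks {ι K κ : Type} [LinearOrder ι] [Countable ι] [Nonempty ι] [LinearOrder K]
    [Countable K] [Nonempty K] [LinearOrder κ] [Countable κ] (e : (Σₗ _ : ι, K) ≃o κ)
    (f : κ → S) : π (ofFun fun i => π (ofFun fun k => f (e (toLex ⟨i, k⟩)))) = π (ofFun f) :=
  (hp.2.2 ι _ fun _ => ⟨(Classical.arbitrary K : K)⟩).trans
    (hp.1 _ _ ⟨toLex ⟨Classical.arbitrary ι, Classical.arbitrary K⟩⟩ ⟨e, fun _ => rfl⟩)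

theorem inducedMul_ofFun_fin {m n : ℕ} [NeZero m] [NeZero n] (f : Fin (m + n) → S) :
    inducedMul π (π (ofFun (f ∘ Fin.castAdd n))) (π (ofFun (f ∘ Fin.natAdd m))) =
      π (ofFun f) := by
  rw [hp.inducedMul_eq_concat ⟨(0 : Fin m)⟩ ⟨(0 : Fin n)⟩]
  exact hp.1 _ _ ⟨toLex ⟨false, (0 : Fin m)⟩⟩ (concat_ofFun_fin_iso f)

theorem inducedMul_ofFun_nat (f : ℕ → S) :
    inducedMul π (f 0) (π (ofFun (f ∘ Nat.succ))) = π (ofFun f) := by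
  rw [← hp.2.1 (f 0), hp.inducedMul_eq_concat inferInstance ⟨(0 : ℕ)⟩]
  exact hp.1 _ _ ⟨toLex ⟨false, (0 : Fin 1)⟩⟩ (concat_single_ofFun_nat_iso f)

theorem inducedMul_eq_ofFun (a b : S) : inducedMul π a b = π (ofFun ![a, b]) := by
  rw [← hp.inducedMul_ofFun_fin (m := 1) (n := 1), hp.ofFun_of_subsingleton _ 0,
    hp.ofFun_of_subsingleton _ 0]
  rfl

theorem inducedMul_assoc (a b c : S) :
    inducedMul π (inducedMul π a b) c = inducedMul π a (inducedMul π b c) := by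
  have h₁ := hp.inducedMul_ofFun_fin (m := 2) (n := 1) ![a, b, c]
  have h₂ := hp.inducedMul_ofFun_fin (m := 1) (n := 2) ![a, b, c]
  rw [hp.ofFun_of_subsingleton (![a, b, c] ∘ Fin.natAdd 2 : Fin 1 → S) 0] at h₁
  rw [hp.ofFun_of_subsingleton (![a, b, c] ∘ Fin.castAdd 2 : Fin 1 → S) 0] at h₂
  rw [hp.inducedMul_eq_ofFun a b, hp.inducedMul_eq_ofFun b c]
  convert h₁.trans h₂.symm using 4 <;> first | rfl | (funext i; fin_cases i <;> rfl)

theorem inducedTau_inducedMul_eq_ofFun (a b : S) :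
    inducedTau π (inducedMul π a b) = π (ofFun fun k : ℕ => if k % 2 = 0 then a else b) := by
  rw [← hp.ofFun_blocks (natSigmaFinOrderIso 1), inducedTau, hp.inducedMul_eq_ofFun]
  congr
  funext m
  congr
  funext k
  fin_cases k <;> simp

theorem inducedTau_inducedMul_shift (a b : S) :
    inducedTau π (inducedMul π a b) = inducedMul π a (inducedTau π (inducedMul π b a)) := by
  rw [hp.inducedTau_inducedMul_eq_ofFun, hp.inducedTau_inducedMul_eq_ofFun, ← hp.inducedMul_ofFun_nat]
  congr
  funext k
  rcases Nat.mod_two_eq_zero_or_one k with h | h <;> simp [Nat.succ_mod_two_eq_zero_iff, h]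

theorem sPow_inducedMul (a : S) (n : ℕ) :
    sPow (inducedMul π) a n = π (ofFun fun _ : Fin (n + 1) => a) := by
  induction n with
  | zero => exact (hp.2.1 a).symm
  | succ n ih =>
    have h := hp.inducedMul_ofFun_fin (m := 1) (n := n + 1) fun _ => a
    rw [hp.ofFun_of_subsingleton _ 0] at h
    rw [sPow, ih]
    exact h.trans (by rw [Nat.add_comm 1 (n + 1)])

theorem inducedTau_sPow (a : S) (n : ℕ) :
    inducedTau π (sPow (inducedMul π) a n) = inducedTau π a := by
  rw [inducedTau, hp.sPow_inducedMul, hp.ofFun_blocks (natSigmaFinOrderIso n) (fun _ => a)]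
  rfl

theorem comp_reverse : IsPlusProd (π ∘ reverse) := by
  refine ⟨fun u v hu h => hp.1 _ _ (hu.map toDual) h.reverse, fun a => ?_,
    fun ι _ _ _ u hu => ?_⟩
  · exact hp.ofFun_of_subsingleton (ι := (Fin 1)ᵒᵈ) _ (toDual 0)
  · exact (hp.2.2 ιᵒᵈ (fun i => (u (ofDual i)).reverse) fun i => (hu (ofDual i)).map toDual).trans
      (hp.1 _ _ ⟨toLex ⟨toDual (Classical.arbitrary ι), toDual (hu _).some⟩⟩ (prod_reverse_iso u))

theorem inducedMul_comp_reverse (a b : S) : inducedMul (π ∘ reverse) a b = inducedMul π b a := by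
  refine hp.1 _ _ ⟨toDual false⟩ ⟨(OrderIso.compl Bool).symm, ?_⟩
  rintro (_ | _) <;> rfl

section Shuffles

variable {w : CWord S} (hw : IsEtaWord P w)
include hw

theorem inducedMul_self_of_isEtaWord : inducedMul π (π w) (π w) = π w := by
  have ⟨_, _, _, _, _⟩ := hw
  rw [hp.inducedMul_eq_concat hw.1 hw.1]
  exact hp.eq_of_isEtaWord ((hw.isDenseOver.concat hw.isDenseOver (.inl ‹_›)).isEtaWord) hw

theorem inducedMul_inducedMul_of_isEtaWord {c : S} (hc : c ∈ P) :
    inducedMul π (π w) (inducedMul π c (π w)) = π w := by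
  have ⟨_, _, _, _, _⟩ := hw
  have hdense := hw.isDenseOver
  rw [← hp.2.1 c, hp.inducedMul_eq_concat inferInstance hw.1,
    hp.inducedMul_eq_concat hw.1 inferInstance]
  exact hp.eq_of_isEtaWord
    ((hdense.concat ((IsDenseOver.single hc).concat hdense (.inr ‹_›)) (.inl ‹_›)).isEtaWord) hw

theorem inducedTau_of_isEtaWord : inducedTau π (π w) = π w := by
  have ⟨_, _, _, _, _⟩ := hw
  rw [hp.inducedTau_eq_omegaPow hw.1]
  exact hp.eq_of_isEtaWord hw.isDenseOver.omegaPow.isEtaWord hw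

theorem inducedTau_inducedMul_of_isEtaWord {c : S} (hc : c ∈ P) :
    inducedTau π (inducedMul π (π w) c) = π w := by
  have ⟨_, _, _, _, _⟩ := hw
  rw [← hp.2.1 c, hp.inducedMul_eq_concat hw.1 inferInstance,
    hp.inducedTau_eq_omegaPow inferInstance]
  exact hp.eq_of_isEtaWord
    (hw.isDenseOver.concat (IsDenseOver.single hc) (.inl ‹_›)).omegaPow.isEtaWord hw

theorem exists_isDenseOver_of_mem_union {P' P'' : Set S} (hP' : P' ⊆ P)
    (hP'' : P'' ⊆ {x | x = π w ∨ (∃ a ∈ P, x = inducedMul π a (π w)) ∨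
      (∃ b ∈ P, x = inducedMul π (π w) b) ∨
      (∃ a ∈ P, ∃ b ∈ P, x = inducedMul π (inducedMul π a (π w)) b)})
    {x : S} (hx : x ∈ P' ∪ P'') :
    ∃ u : CWord S, Nonempty u.carrier ∧ IsDenseOver P u ∧ π u = x ∧
      (x ∈ P'' → P ⊆ Set.range u.label) := by
  have ⟨_, _, _, _, _⟩ := hw
  have hdense := hw.isDenseOver
  have hrange : P ⊆ Set.range w.label := fun a ha => hw.exists_label ha
  by_cases hx'' : x ∈ P''
  · refine (hP'' hx'').elim (fun h => ⟨w, hw.1, hdense, h.symm, fun _ => hrange⟩) ?_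
    rintro (⟨a, ha, rfl⟩ | ⟨b, hb, rfl⟩ | ⟨a, ha, b, hb, rfl⟩)
    · refine ⟨concat (single a) w, inferInstance,
        (IsDenseOver.single ha).concat hdense (.inr ‹_›), ?_,
        fun _ => hrange.trans (range_label_subset_concat_right _ _)⟩
      rw [← hp.inducedMul_eq_concat inferInstance hw.1, hp.2.1]
    · refine ⟨concat w (single b), inferInstance,
        hdense.concat (IsDenseOver.single hb) (.inl ‹_›), ?_,
        fun _ => hrange.trans (range_label_subset_concat_left _ _)⟩
      rw [← hp.inducedMul_eq_concat hw.1 inferInstance, hp.2.1]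
    · refine ⟨concat (concat (single a) w) (single b), inferInstance,
        ((IsDenseOver.single ha).concat hdense (.inr ‹_›)).concat (IsDenseOver.single hb)
          (.inl inferInstance), ?_, fun _ => hrange.trans
          ((range_label_subset_concat_right _ _).trans (range_label_subset_concat_left _ _))⟩
      rw [← hp.inducedMul_eq_concat inferInstance inferInstance,
        ← hp.inducedMul_eq_concat inferInstance hw.1, hp.2.1, hp.2.1]
  · exact ⟨single x, inferInstance, IsDenseOver.single (hP' (hx.resolve_right hx'')),
      hp.2.1 x, fun h => absurd h hx''⟩

theorem eq_of_isEtaWord_union {P' P'' : Set S} (hP' : P' ⊆ P) (hP''ne : P''.Nonempty)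
    (hP'' : P'' ⊆ {x | x = π w ∨ (∃ a ∈ P, x = inducedMul π a (π w)) ∨
      (∃ b ∈ P, x = inducedMul π (π w) b) ∨
      (∃ a ∈ P, ∃ b ∈ P, x = inducedMul π (inducedMul π a (π w)) b)})
    {w' : CWord S} (hw' : IsEtaWord (P' ∪ P'') w') : π w' = π w := by
  choose B hBne hBdense hBπ hBrange using
    fun z => hp.exists_isDenseOver_of_mem_union hw hP' hP'' (hw'.label_mem z)
  have ⟨_, _, _, _, _, hbetween⟩ := hw'
  obtain ⟨p, hp''⟩ := hP''ne
  have hsubst : π w' = π (prod B) :=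
    (congrArg (fun f => π (ofFun f)) (funext hBπ)).symm.trans (hp.2.2 _ B hBne)
  have : Nonempty (prod B).carrier := ⟨toLex ⟨Classical.arbitrary _, (hBne _).some⟩⟩
  have := noMinOrder_prod fun z => .inl <|
    let ⟨z', hz'⟩ := NoMinOrder.exists_lt z; ⟨z', hz', hBne z'⟩
  have := noMaxOrder_prod fun z => .inl <|
    let ⟨z', hz'⟩ := NoMaxOrder.exists_gt z; ⟨z', hz', hBne z'⟩
  refine hsubst.trans
    (hp.eq_of_isEtaWord (IsDenseOver.prod hBdense fun z z' hzz' => .inl ?_).isEtaWord hw)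
  obtain ⟨z'', hzz'', hz''z', hz''⟩ := hbetween p (.inr hp'') z z' hzz'
  exact ⟨z'', hzz'', hz''z', hBrange z'' (hz'' ▸ hp'')⟩

end Shuffles

end IsPlusProd

namespace IsOProd

variable (ho : IsOProd π)
include ho

theorem isPlusProd : IsPlusProd π :=
  ⟨fun u v _ h => ho.1 u v h, ho.2.1, fun ι _ _ _ u _ => ho.2.2 ι u⟩

theorem eq_epsilon_of_isEmpty {u : CWord S} (hu : IsEmpty u.carrier) : π u = π epsilon :=
  ho.1 _ _ (Iso.of_strictMono hu.elim (fun x => hu.elim x) (fun y => Fin.elim0 y)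
    fun x => hu.elim x)

theorem eq_restrict (w : CWord S) (Q : w.carrier → Prop)
    (hQ : ∀ z, ¬ Q z → w.label z = π epsilon) : π w = π (w.restrict Q) := by
  -- `v z` is the one-letter word at `z` if `Q z`, and an empty word otherwise
  let v z := ofFun fun _ : {_i : Fin 1 // Q z} => w.label z
  have hv : ∀ z, π (v z) = w.label z := fun z => by
    by_cases hz : Q z
    · exact ho.isPlusProd.ofFun_of_subsingleton _ ⟨0, hz⟩
    · exact (ho.eq_epsilon_of_isEmpty (u := v z) ⟨fun x => hz x.2⟩).trans (hQ z hz).symm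
  refine (congrArg (fun f => π (ofFun f)) (funext hv)).symm.trans ((ho.2.2 _ v).trans
    (ho.1 _ _ (Iso.of_strictMono (fun p => ⟨(ofLex p).1, (ofLex p).2.2⟩) ?_
      (fun z => ⟨toLex ⟨z.1, ⟨0, z.2⟩⟩, rfl⟩) fun _ => rfl)))
  rintro p q (@⟨i, j, x, y, h⟩ | @⟨i, x, y, h⟩)
  · exact h
  · exact absurd h (Subsingleton.elim (α := {_i : Fin 1 // Q i}) x y ▸ lt_irrefl x)

theorem eq_epsilon_of_forall_label {w : CWord S} (h : ∀ z, w.label z = π epsilon) :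
    π w = π epsilon :=
  (ho.eq_restrict w (fun _ => False) fun z _ => h z).trans
    (ho.eq_epsilon_of_isEmpty ⟨fun x => x.2⟩)

theorem inducedMul_epsilon (x : S) : inducedMul π x (π epsilon) = x := by
  rw [inducedMul, ho.eq_restrict _ (fun b : Bool => b = false)]
  · exact ho.isPlusProd.ofFun_of_subsingleton (ι := {b : Bool // b = false}) _ ⟨false, rfl⟩
  · rintro (_ | _) h
    exacts [absurd rfl h, rfl]

theorem epsilon_inducedMul (x : S) : inducedMul π (π epsilon) x = x := by
  rw [inducedMul, ho.eq_restrict _ (fun b : Bool => b = true)]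
  · exact ho.isPlusProd.ofFun_of_subsingleton (ι := {b : Bool // b = true}) _ ⟨true, rfl⟩
  · rintro (_ | _) h
    exacts [rfl, absurd rfl h]

theorem eq_of_isEtaWord_union_epsilon {w w' : CWord S} (hw : IsEtaWord P w)
    (hw' : IsEtaWord (P ∪ {π epsilon}) w') : π w' = π w :=
  (ho.eq_restrict w' (fun z => w'.label z ∈ P) fun z hz => (hw'.label_mem z).resolve_left hz).trans
    (ho.isPlusProd.eq_of_isEtaWord
      (hw'.restrict ⟨_, hw.label_mem hw.1.some⟩ Set.subset_union_left) hw)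

end IsOProd

variable {kappa : Set S → S}

theorem plusAlgAxioms_of_isPlusProd (hp : IsPlusProd π)
    (hκ : ∀ P : Set S, P.Nonempty → ∃ w, IsEtaWord P w ∧ kappa P = π w) :
    PlusAlgAxioms (inducedMul π) (inducedTau π) (inducedTau (π ∘ reverse)) kappa := by
  have hp' := hp.comp_reverse
  have hmul' : inducedMul (π ∘ reverse) = fun a b => inducedMul π b a :=
    funext₂ hp.inducedMul_comp_reverse
  refine ⟨hp.inducedMul_assoc, hp.inducedTau_inducedMul_shift, hp.inducedTau_sPow,
    fun a b => ?_, fun a n => ?_, ?_⟩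
  · simpa only [hmul'] using hp'.inducedTau_inducedMul_shift a b
  · simpa only [hmul', sPow_swap hp.inducedMul_assoc] using hp'.inducedTau_sPow a n
  intro P hP c hc P' hP' P'' hP''ne hP''
  obtain ⟨w, hw, hκw⟩ := hκ P hP
  obtain ⟨w', hw', hκw'⟩ := hκ (P' ∪ P'') (hP''ne.mono Set.subset_union_right)
  have hrev : (π ∘ reverse) w = π w := hp.eq_of_isEtaWord hw.reverse hw
  rw [hκw] at hP'' ⊢
  rw [hκw']
  refine ⟨(hp.inducedMul_self_of_isEtaWord hw).symm,
    (hp.inducedMul_inducedMul_of_isEtaWord hw hc).symm, (hp.inducedTau_of_isEtaWord hw).symm,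
    (hp.inducedTau_inducedMul_of_isEtaWord hw hc).symm, ?_, ?_,
    (hp.eq_of_isEtaWord_union hw hP' hP''ne hP'' hw').symm⟩
  · simpa only [hrev] using (hp'.inducedTau_of_isEtaWord hw).symm
  · simpa only [hrev, hmul'] using (hp'.inducedTau_inducedMul_of_isEtaWord hw hc).symm

theorem oAlgAxioms_of_isOProd (ho : IsOProd π)
    (hκ : ∀ P : Set S, P.Nonempty → ∃ w, IsEtaWord P w ∧ kappa P = π w) :
    OAlgAxioms (π epsilon) (inducedMul π) (inducedTau π) (inducedTau (π ∘ reverse)) kappa := by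
  refine ⟨plusAlgAxioms_of_isPlusProd ho.isPlusProd hκ, ho.inducedMul_epsilon,
    ho.epsilon_inducedMul, ho.eq_epsilon_of_forall_label fun _ => rfl,
    ho.eq_epsilon_of_forall_label fun _ => rfl, ?_, fun P hP => ?_⟩
  · obtain ⟨w, hw, hκw⟩ := hκ {π epsilon} (Set.singleton_nonempty _)
    exact hκw.trans (ho.eq_epsilon_of_forall_label hw.label_mem)
  · obtain ⟨w, hw, hκw⟩ := hκ P hP
    obtain ⟨w', hw', hκw'⟩ := hκ (P ∪ {π epsilon}) (hP.mono Set.subset_union_left)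
    rw [hκw, hκw']
    exact ho.eq_of_isEtaWord_union_epsilon hw hw'

end CWord

/-- if `(S, π)` is a ⊕-semigroup, then `S` equipped with the
operators induced by `π` satisfies axioms (A1)–(A4), i.e. is a ⊕-algebra;
similarly, if `(S, π)` is a ◦-monoid, then `S` equipped with the induced
operators together with `1 = π(ε)` satisfies axioms (A1)–(A5), i.e. is a
◦-algebra. -/
theorem induced_operators_satisfy_axioms {S : Type} (π : CWord S → S)
    (mul : S → S → S) (tau taustar : S → S) (kappa : Set S → S) (one : S) :
    (CWord.IsPlusProd π → InducedByProd π mul tau taustar kappa →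
      PlusAlgAxioms mul tau taustar kappa) ∧
    (CWord.IsOProd π → InducedByProd π mul tau taustar kappa →
      one = π CWord.epsilon → OAlgAxioms one mul tau taustar kappa) := by
  -- the reverse of the `ω`-word `a a a ⋯` is, by definition, the `ω*`-word `⋯ a a a`
  have hops : InducedByProd π mul tau taustar kappa →
      mul = CWord.inducedMul π ∧ tau = CWord.inducedTau π ∧
        taustar = CWord.inducedTau (π ∘ CWord.reverse) :=
    fun ⟨hmul, htau, htaustar, _⟩ => ⟨funext₂ hmul, funext htau, funext htaustar⟩
  refine ⟨fun hp hi => ?_, fun ho hi hone => ?_⟩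
  · obtain ⟨rfl, rfl, rfl⟩ := hops hi
    exact CWord.plusAlgAxioms_of_isPlusProd hp hi.2.2.2
  · obtain ⟨rfl, rfl, rfl⟩ := hops hi
    subst hone
    exact CWord.oAlgAxioms_of_isOProd ho hi.2.2.2
end

section
/- Let S be a finite set with operations · : S×S→S, τ,τ* : S→S, κ from nonempty subsets of S to S, let (T,γ) be an evaluation tree with respect to the extended map π₀^ over a nonempty countable word u : α → S, and let I be a nonempty convex subset of α. Then there exists γ_I : T|_I → S such that (T|_I, γ_I) is an evaluation tree with respect to π₀^ over the factor u|_I and γ_I(J) = γ(J) for every J ∈ T with J ⊆ I, where T|_I = {I ∩ J : J ∈ T, I ∩ J ≠ ∅}. -/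
section Trees

variable {α : Type}

/-- `I < J` pointwise, for subsets of a linear order. -/
def SetLT [LinearOrder α] (I J : Set α) : Prop := ∀ x ∈ I, ∀ y ∈ J, x < y

/-- `I` is a convex subset of the suborder induced on `R`. -/
def ConvexIn [LinearOrder α] (R I : Set α) : Prop :=
  ∀ x ∈ I, ∀ y ∈ I, ∀ z ∈ R, x < z → z < y → z ∈ I

/-- `T` is a condensation tree over the suborder induced on `R`:
a set of nonempty convex subsets of `R` containing the root `R`, pairwise
comparable-or-disjoint, such that the union of the members properly contained
in a given member is that member or empty, and all chains are finite. -/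
structure IsCondTreeOn [LinearOrder α] (R : Set α) (T : Set (Set α)) : Prop where
  root_mem : R ∈ T
  mem_subset : ∀ I ∈ T, I ⊆ R
  mem_nonempty : ∀ I ∈ T, I.Nonempty
  mem_convex : ∀ I ∈ T, ConvexIn R I
  comparable_or_disjoint : ∀ I ∈ T, ∀ J ∈ T, I ⊆ J ∨ J ⊆ I ∨ I ∩ J = ∅
  children_union : ∀ I ∈ T,
    ⋃₀ {J | J ∈ T ∧ J ⊂ I} = I ∨ ⋃₀ {J | J ∈ T ∧ J ⊂ I} = ∅
  chains_finite : ∀ C ⊆ T, IsChain (· ⊆ ·) C → C.Finite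

/-- A leaf of `T`: a member minimal with respect to inclusion. -/
def IsLeafOf (T : Set (Set α)) (I : Set α) : Prop :=
  I ∈ T ∧ ∀ J ∈ T, J ⊆ I → J = I

/-- `J` is a child of `I` in `T`: a maximal member of `T` properly contained in `I`. -/
def IsChildOf (T : Set (Set α)) (J I : Set α) : Prop :=
  J ∈ T ∧ J ⊂ I ∧ ∀ K ∈ T, J ⊂ K → I ⊆ K

end Trees
/-- The restriction to `D` of the labelled family `lab`, with positions ordered by the
strict ordering `r`, is an η-shuffle of the set of letters `P`: `D` is countable,
nonempty, without endpoints, every letter of `P` (and no other letter) occurs on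
a dense subset of `D`. -/
def IsEtaFamilyOn {S ι : Type} (r : ι → ι → Prop) (lab : ι → S) (D : Set ι)
    (P : Set S) : Prop :=
  D.Nonempty ∧ D.Countable ∧
  (∀ x ∈ D, ∃ y ∈ D, r x y) ∧ (∀ x ∈ D, ∃ y ∈ D, r y x) ∧
  (∀ x ∈ D, lab x ∈ P) ∧
  (∀ a ∈ P, ∀ x ∈ D, ∀ y ∈ D, r x y → ∃ z ∈ D, r x z ∧ r z y ∧ lab z = a) ∧
  (∀ a ∈ P, ∃ x ∈ D, lab x = a)
/-- The extended partial map `π₀^`, as a relation: the word given by the positions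
`ι` (ordered by the strict ordering `r`) with labels `lab` is in the domain of
`π₀^` with value `v`.  The clauses correspond to finite nonempty words
`a₁ ⋯ aₙ`, words `a b^ω`, words `b^{ω*} a`, and words `a P^η b` where either or
both of the end letters `a`, `b` may be absent. -/
def Pi0HatRel {S : Type} (mul : S → S → S) (tau taustar : S → S) (kappa : Set S → S)
    {ι : Type} (r : ι → ι → Prop) (lab : ι → S) (v : S) : Prop :=
  (∃ (n : ℕ) (g : Fin (n + 1) → ι),
      (∀ i j : Fin (n + 1), i < j → r (g i) (g j)) ∧ (∀ x : ι, ∃ i, g i = x) ∧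
      v = List.foldl mul (lab (g 0)) (List.ofFn fun i : Fin n => lab (g i.succ))) ∨
  (∃ g : ℕ → ι, (∀ m n : ℕ, m < n → r (g m) (g n)) ∧ (∀ x : ι, ∃ n, g n = x) ∧
      ∃ b : S, (∀ n : ℕ, 0 < n → lab (g n) = b) ∧ v = mul (lab (g 0)) (tau b)) ∨
  (∃ g : ℕ → ι, (∀ m n : ℕ, m < n → r (g n) (g m)) ∧ (∀ x : ι, ∃ n, g n = x) ∧
      ∃ b : S, (∀ n : ℕ, 0 < n → lab (g n) = b) ∧ v = mul (taustar b) (lab (g 0))) ∨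
  (∃ P : Set S, P.Nonempty ∧
    ((IsEtaFamilyOn r lab Set.univ P ∧ v = kappa P) ∨
     (∃ x₀ : ι, (∀ y : ι, y ≠ x₀ → r x₀ y) ∧ IsEtaFamilyOn r lab {y | y ≠ x₀} P ∧
        v = mul (lab x₀) (kappa P)) ∨
     (∃ x₁ : ι, (∀ y : ι, y ≠ x₁ → r y x₁) ∧ IsEtaFamilyOn r lab {y | y ≠ x₁} P ∧
        v = mul (kappa P) (lab x₁)) ∨
     (∃ x₀ x₁ : ι, x₀ ≠ x₁ ∧ (∀ y : ι, y ≠ x₀ → r x₀ y) ∧ (∀ y : ι, y ≠ x₁ → r y x₁) ∧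
        IsEtaFamilyOn r lab {y | y ≠ x₀ ∧ y ≠ x₁} P ∧
        v = mul (mul (lab x₀) (kappa P)) (lab x₁))))
/-- `(T, γ)` is an evaluation tree with respect to the extended map `π₀^` over
the word `u` restricted to the root `R`. -/
structure IsEvalTreeHat {S α : Type} [LinearOrder α] (mul : S → S → S)
    (tau taustar : S → S) (kappa : Set S → S) (u : α → S)
    (R : Set α) (T : Set (Set α)) (γ : Set α → S) : Prop where
  tree : IsCondTreeOn R T
  leaf_spec : ∀ I : Set α, IsLeafOf T I → ∃ x : α, I = {x} ∧ γ I = u x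
  node_spec : ∀ I ∈ T, ¬ IsLeafOf T I →
    Pi0HatRel mul tau taustar kappa
      (fun J K : {J : Set α // IsChildOf T J I} => SetLT J.1 K.1)
      (fun J : {J : Set α // IsChildOf T J I} => γ J.1) (γ I)
/-- The restriction `T|_I = {I ∩ J : J ∈ T, I ∩ J ≠ ∅}` of a condensation tree
to a convex subset `I`. -/
def restrictTree {α : Type} (T : Set (Set α)) (I : Set α) : Set (Set α) :=
  {K | ∃ J ∈ T, K = I ∩ J ∧ (I ∩ J).Nonempty}

/-!
Every member `K` of `T|_I` is the trace `I ∩ J` of a least `J ∈ T`, its origin, and the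
children of `K` in `T|_I` are exactly the nonempty traces of the children of `J`. As `I` is
convex, every child of `J` lying between two children that meet `I` is contained in `I`. So the
word of children of `K` is a convex factor of the word of children of `J` whose letters can
differ only at its two ends. Such a factor of a word in the domain of `π₀^` is again in the
domain: finite words stay finite, `ω`- and `ω*`-words keep a constant tail, and the non-extremal
positions of a factor of a shuffle carry the same shuffle. Hence `γ_I` can be defined by
well-founded recursion on `T|_I`: a member of `T` inside `I` keeps its `γ`-value, and any other
node gets some `π₀^`-value of its word of children.
-/

section Transfer

variable {S ι ι' : Type} {r : ι → ι → Prop} {r' : ι' → ι' → Prop} (e : ι ≃ ι')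
  {lab : ι → S} {lab' : ι' → S}

theorem IsEtaFamilyOn.image_equiv (hr : ∀ a b, r a b ↔ r' (e a) (e b))
    (hlab : ∀ a, lab a = lab' (e a)) {D : Set ι} {P : Set S} (h : IsEtaFamilyOn r lab D P) :
    IsEtaFamilyOn r' lab' (e '' D) P := by
  obtain ⟨hne, hcount, hmax, hmin, hmem, hdense, hocc⟩ := h
  refine ⟨hne.image e, hcount.image e, ?_⟩
  simp only [Set.forall_mem_image, Set.exists_mem_image, ← hr, ← hlab]
  exact ⟨hmax, hmin, hmem, hdense, hocc⟩

theorem Pi0HatRel.of_equiv {mul : S → S → S} {tau taustar : S → S} {kappa : Set S → S}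
    (hr : ∀ a b, r a b ↔ r' (e a) (e b)) (hlab : ∀ a, lab a = lab' (e a)) {v : S}
    (h : Pi0HatRel mul tau taustar kappa r lab v) : Pi0HatRel mul tau taustar kappa r' lab' v := by
  have hsurj : ∀ {κ : Type} {g : κ → ι}, (∀ x, ∃ i, g i = x) → ∀ x, ∃ i, e (g i) = x :=
    fun hg x => (hg (e.symm x)).imp fun i hi => by rw [hi, e.apply_symm_apply]
  have hfirst : ∀ {x₀}, (∀ y, y ≠ x₀ → r x₀ y) → ∀ y, y ≠ e x₀ → r' (e x₀) y := fun h =>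
    e.forall_congr_right.1 fun a ha => (hr _ _).1 (h a (ne_of_apply_ne e ha))
  have hlast : ∀ {x₁}, (∀ y, y ≠ x₁ → r y x₁) → ∀ y, y ≠ e x₁ → r' y (e x₁) := fun h =>
    e.forall_congr_right.1 fun a ha => (hr _ _).1 (h a (ne_of_apply_ne e ha))
  have heta : ∀ {D : Set ι} {D' : Set ι'} {P : Set S}, e '' D = D' →
      IsEtaFamilyOn r lab D P → IsEtaFamilyOn r' lab' D' P := fun hD h =>
    hD ▸ h.image_equiv e hr hlab
  obtain rfl : lab = lab' ∘ e := funext hlab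
  rcases h with ⟨n, g, hg, hgs, hv⟩ | ⟨g, hg, hgs, b, hb, hv⟩ | ⟨g, hg, hgs, b, hb, hv⟩ |
    ⟨P, hP, ⟨hfam, hv⟩ | ⟨x₀, hx₀, hfam, hv⟩ | ⟨x₁, hx₁, hfam, hv⟩ |
      ⟨x₀, x₁, hne, hx₀, hx₁, hfam, hv⟩⟩
  · exact Or.inl ⟨n, e ∘ g, fun i j hij => (hr _ _).1 (hg i j hij), hsurj hgs, hv⟩
  · exact Or.inr <| Or.inl ⟨e ∘ g, fun m n hmn => (hr _ _).1 (hg m n hmn), hsurj hgs, b, hb, hv⟩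
  · exact Or.inr <| Or.inr <| Or.inl
      ⟨e ∘ g, fun m n hmn => (hr _ _).1 (hg m n hmn), hsurj hgs, b, hb, hv⟩
  all_goals refine Or.inr <| Or.inr <| Or.inr ⟨P, hP, ?_⟩
  · exact Or.inl ⟨heta (by simp) hfam, hv⟩
  · refine Or.inr <| Or.inl ⟨e x₀, hfirst hx₀, heta ?_ hfam, hv⟩
    ext; simp [Equiv.image_eq_preimage_symm, Equiv.symm_apply_eq]
  · refine Or.inr <| Or.inr <| Or.inl ⟨e x₁, hlast hx₁, heta ?_ hfam, hv⟩
    ext; simp [Equiv.image_eq_preimage_symm, Equiv.symm_apply_eq]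
  · refine Or.inr <| Or.inr <| Or.inr
      ⟨e x₀, e x₁, e.injective.ne hne, hfirst hx₀, hlast hx₁, heta ?_ hfam, hv⟩
    ext; simp [Equiv.image_eq_preimage_symm, Equiv.symm_apply_eq]

end Transfer

/-- In a word `a P^η b`, the letters of `P^η` sit exactly at the non-extremal positions. -/
def nonExtremal (β : Type) [Preorder β] : Set β := {z | ¬IsMin z ∧ ¬IsMax z}

section Shuffles

variable {S ι : Type} [LinearOrder ι]

theorem infinite_nonExtremal [Infinite ι] : (nonExtremal ι).Infinite :=
  ((Set.finite_isBot ι).union (Set.finite_isTop ι)).infinite_compl.mono fun z hz => by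
    simp only [Set.mem_compl_iff, Set.mem_union, Set.mem_ofPred_eq, isBot_iff_isMin,
      isTop_iff_isMax, not_or] at hz
    exact hz

variable {lab lab' : ι → S} {P : Set S}

theorem IsEtaFamilyOn.eq_nonExtremal {D : Set ι} (h : IsEtaFamilyOn (· < ·) lab D P)
    (hends : ∀ x ∉ D, IsBot x ∨ IsTop x) : D = nonExtremal ι := by
  obtain ⟨-, -, hmax, hmin, -⟩ := h
  ext z
  refine ⟨fun hz => ?_, fun hz => by_contra fun hzD => ?_⟩
  · obtain ⟨x, -, hxz⟩ := hmin z hz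
    obtain ⟨y, -, hzy⟩ := hmax z hz
    exact ⟨not_isMin_of_lt hxz, not_isMax_of_lt hzy⟩
  · rcases hends z hzD with hbot | htop
    exacts [hz.1 hbot.isMin, hz.2 htop.isMax]

theorem IsEtaFamilyOn.exists_between (hP : P.Nonempty)
    (h : IsEtaFamilyOn (· < ·) lab (nonExtremal ι) P) {x y : ι} (hxy : x < y)
    (hxy' : x ∈ nonExtremal ι ∨ y ∈ nonExtremal ι) : ∃ d, x < d ∧ d < y := by
  obtain ⟨-, -, hmax, hmin, -, hdense, -⟩ := h
  obtain ⟨a, ha⟩ := hP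
  by_cases hx : x ∈ nonExtremal ι <;> by_cases hy : y ∈ nonExtremal ι
  · obtain ⟨d, -, hxd, hdy, -⟩ := hdense a ha x hx y hy hxy
    exact ⟨d, hxd, hdy⟩
  · have hymax : IsMax y := by_contra fun hy' => hy ⟨not_isMin_of_lt hxy, hy'⟩
    obtain ⟨d, hd, hxd⟩ := hmax x hx
    exact ⟨d, hxd, lt_of_not_ge fun hyd => hd.2 (hymax.mono hyd)⟩
  · have hxmin : IsMin x := by_contra fun hx' => hx ⟨hx', not_isMax_of_lt hxy⟩
    obtain ⟨d, hd, hdy⟩ := hmin y hy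
    exact ⟨d, lt_of_not_ge fun hdx => hd.1 (hxmin.mono hdx), hdy⟩
  · exact (hxy'.elim hx hy).elim

theorem IsEtaFamilyOn.subtype_nonExtremal (hP : P.Nonempty)
    (h : IsEtaFamilyOn (· < ·) lab (nonExtremal ι) P) {M : Set ι} (hM : M.Infinite)
    (hMc : M.OrdConnected) (hlab : ∀ z ∈ nonExtremal M, lab' z = lab z) :
    IsEtaFamilyOn (· < ·) (fun z : M => lab' z) (nonExtremal M) P := by
  obtain ⟨-, hcount, -, -, hmemP, hdenseP, -⟩ := id h
  have : Infinite M := hM.to_subtype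
  have hval : ∀ z ∈ nonExtremal M, (z : ι) ∈ nonExtremal ι := fun z hz =>
    ⟨fun hmin => hz.1 fun _ hx => hmin hx, fun hmax => hz.2 fun _ hx => hmax hx⟩
  have hmid : ∀ {x y : M} {d : ι}, x < d → d < y →
      ∃ z ∈ nonExtremal M, (z : ι) = d ∧ x < z ∧ z < y := fun {x y d} hxd hdy =>
    ⟨⟨d, hMc.out x.2 y.2 ⟨hxd.le, hdy.le⟩⟩,
      ⟨not_isMin_of_lt (b := x) hxd, not_isMax_of_lt (b := y) hdy⟩, rfl, hxd, hdy⟩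
  have hmax : ∀ z ∈ nonExtremal M, ∃ y ∈ nonExtremal M, z < y := fun z hz => by
    obtain ⟨w, hzw⟩ := not_isMax_iff.1 hz.2
    obtain ⟨d, hzd, hdw⟩ := h.exists_between hP hzw (Or.inl (hval z hz))
    obtain ⟨c, hc, -, hzc, -⟩ := hmid hzd hdw
    exact ⟨c, hc, hzc⟩
  have hmin : ∀ z ∈ nonExtremal M, ∃ y ∈ nonExtremal M, y < z := fun z hz => by
    obtain ⟨w, hwz⟩ := not_isMin_iff.1 hz.1
    obtain ⟨d, hwd, hdz⟩ := h.exists_between hP hwz (Or.inr (hval z hz))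
    obtain ⟨c, hc, -, -, hcz⟩ := hmid hwd hdz
    exact ⟨c, hc, hcz⟩
  have hdense : ∀ a ∈ P, ∀ x ∈ nonExtremal M, ∀ y ∈ nonExtremal M, x < y →
      ∃ z ∈ nonExtremal M, x < z ∧ z < y ∧ lab' z = a := fun a ha x hx y hy hxy => by
    obtain ⟨d, -, hxd, hdy, hda⟩ := hdenseP a ha x (hval x hx) y (hval y hy) hxy
    obtain ⟨c, hc, rfl, hxc, hcy⟩ := hmid hxd hdy
    exact ⟨c, hc, hxc, hcy, (hlab c hc).trans hda⟩
  obtain ⟨z, hz⟩ := (infinite_nonExtremal (ι := M)).nonempty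
  refine ⟨⟨z, hz⟩, (hcount.preimage Subtype.val_injective).mono hval, hmax, hmin,
    fun z hz => by simpa only [hlab z hz] using hmemP z (hval z hz), hdense, fun a ha => ?_⟩
  obtain ⟨y, hy, hzy⟩ := hmax z hz
  obtain ⟨c, hc, -, -, hca⟩ := hdense a ha z hz y hy hzy
  exact ⟨c, hc, hca⟩

variable (mul : S → S → S) (tau taustar : S → S) (kappa : Set S → S)

theorem Pi0HatRel.exists_of_isEtaFamilyOn (hP : P.Nonempty)
    (h : IsEtaFamilyOn (· < ·) lab (nonExtremal ι) P) :
    ∃ v, Pi0HatRel mul tau taustar kappa (· < ·) lab v := by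
  have hfirst : ∀ {m : ι}, IsBot m → ∀ y, y ≠ m → m < y := fun hm _ hy => hm.lt_of_ne hy.symm
  have hlast : ∀ {m : ι}, IsTop m → ∀ y, y ≠ m → y < m := fun hm _ hy => hm.lt_of_ne hy
  by_cases hbot : ∃ m : ι, IsBot m <;> by_cases htop : ∃ m : ι, IsTop m
  · obtain ⟨m, hm⟩ := hbot
    obtain ⟨m', hm'⟩ := htop
    have hmm' : m ≠ m' := by
      rintro rfl
      obtain ⟨z, hz⟩ := h.1
      exact hz.1 (hm.isMin_iff.2 (le_antisymm (hm' z) (hm z)))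
    have hD : nonExtremal ι = {y | y ≠ m ∧ y ≠ m'} := by
      ext; simp [nonExtremal, hm.isMin_iff, hm'.isMax_iff]
    exact ⟨_, Or.inr <| Or.inr <| Or.inr ⟨P, hP, Or.inr <| Or.inr <| Or.inr
      ⟨m, m', hmm', hfirst hm, hlast hm', hD ▸ h, rfl⟩⟩⟩
  · obtain ⟨m, hm⟩ := hbot
    push Not at htop
    have hD : nonExtremal ι = {y | y ≠ m} := by
      ext; simp [nonExtremal, hm.isMin_iff, ← isTop_iff_isMax, htop]
    exact ⟨_, Or.inr <| Or.inr <| Or.inr ⟨P, hP, Or.inr <| Or.inl ⟨m, hfirst hm, hD ▸ h, rfl⟩⟩⟩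
  · obtain ⟨m', hm'⟩ := htop
    push Not at hbot
    have hD : nonExtremal ι = {y | y ≠ m'} := by
      ext; simp [nonExtremal, hm'.isMax_iff, ← isBot_iff_isMin, hbot]
    exact ⟨_, Or.inr <| Or.inr <| Or.inr ⟨P, hP, Or.inr <| Or.inr <| Or.inl
      ⟨m', hlast hm', hD ▸ h, rfl⟩⟩⟩
  · push Not at hbot htop
    have hD : nonExtremal ι = Set.univ := by
      ext; simp [nonExtremal, ← isBot_iff_isMin, ← isTop_iff_isMax, hbot, htop]
    exact ⟨_, Or.inr <| Or.inr <| Or.inr ⟨P, hP, Or.inl ⟨hD ▸ h, rfl⟩⟩⟩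

theorem Pi0HatRel.exists_of_finite [Finite ι] [Nonempty ι] (lab : ι → S) :
    ∃ v, Pi0HatRel mul tau taustar kappa (· < ·) lab v := by
  have := Fintype.ofFinite ι
  obtain ⟨n, hn⟩ : ∃ n, Fintype.card ι = n + 1 :=
    Nat.exists_eq_succ_of_ne_zero Fintype.card_ne_zero
  let g := monoEquivOfFin ι hn
  exact ⟨_, Or.inl ⟨n, g, fun i j hij => g.strictMono hij, g.surjective, rfl⟩⟩

end Shuffles

theorem exists_tail_enum {ι : Type} {r : ι → ι → Prop} {g : ℕ → ι}
    (hg : ∀ m n, m < n → r (g m) (g n)) (hgs : Function.Surjective g) {M : Set ι}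
    (hM : M.Infinite) (hMc : ∀ x ∈ M, ∀ y ∈ M, ∀ z, r x z → r z y → z ∈ M) :
    ∃ g' : ℕ → M, (∀ m n, m < n → r (g' m) (g' n)) ∧ Function.Surjective g' ∧
      ∀ n, ∃ k, n ≤ k ∧ (g' n : ι) = g k := by
  have hN : (g ⁻¹' M).Infinite :=
    Set.Infinite.of_image g (by rwa [Set.image_preimage_eq M hgs])
  have hp := Nat.sInf_mem hN.nonempty
  set p := sInf (g ⁻¹' M)
  have hmem : ∀ n, g (p + n) ∈ M := fun n => by
    obtain ⟨m, hm, hnm⟩ := hN.exists_gt (p + n)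
    rcases n.eq_zero_or_pos with rfl | hn
    · exact hp
    · exact hMc _ hp _ hm _ (hg _ _ (by omega)) (hg _ _ hnm)
  refine ⟨fun n => ⟨g (p + n), hmem n⟩, fun m n hmn => hg _ _ (by omega), ?_,
    fun n => ⟨p + n, by omega, rfl⟩⟩
  rintro ⟨x, hx⟩
  obtain ⟨n, rfl⟩ := hgs x
  exact ⟨n - p, Subtype.ext (congrArg g (Nat.add_sub_cancel' (Nat.sInf_le hx)))⟩

section Restrict

variable {S ι : Type} {mul : S → S → S} {tau taustar : S → S} {kappa : Set S → S}

theorem isBot_of_forall_ne_lt [LinearOrder ι] {x : ι} (hx : ∀ y, y ≠ x → x < y) : IsBot x :=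
  fun y => (eq_or_ne y x).elim (fun e => e.ge) fun hy => (hx y hy).le

theorem isTop_of_forall_ne_lt [LinearOrder ι] {x : ι} (hx : ∀ y, y ≠ x → y < x) : IsTop x :=
  fun y => (eq_or_ne y x).elim (fun e => e.le) fun hy => (hx y hy).le

theorem Pi0HatRel.exists_restrict_of_infinite [LinearOrder ι] {lab lab' : ι → S} {v : S}
    (h : Pi0HatRel mul tau taustar kappa (· < ·) lab v) {M : Set ι} (hM : M.Infinite)
    (hMc : M.OrdConnected) (hlab : ∀ z ∈ nonExtremal M, lab' z = lab z) :
    ∃ v', Pi0HatRel mul tau taustar kappa (· < ·) (fun z : M => lab' z) v' := by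
  rcases h with ⟨n, g, -, hgs, -⟩ | ⟨g, hg, hgs, b, hb, -⟩ | ⟨g, hg, hgs, b, hb, -⟩ | ⟨P, hP, hη⟩
  · have : Finite ι := Finite.of_surjective g hgs
    exact absurd M.toFinite hM
  · obtain ⟨g', hg', hg's, hk⟩ := exists_tail_enum hg hgs hM
      fun x hx y hy z hxz hzy => hMc.out hx hy ⟨hxz.le, hzy.le⟩
    refine ⟨_, Or.inr <| Or.inl ⟨g', hg', hg's, b, fun n hn => ?_, rfl⟩⟩
    obtain ⟨k, hnk, hgk⟩ := hk n
    show lab' (g' n : ι) = b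
    rw [hlab _ ⟨not_isMin_of_lt (hg' 0 n hn), not_isMax_of_lt (hg' n (n + 1) n.lt_succ_self)⟩,
      hgk]
    exact hb k (by omega)
  · obtain ⟨g', hg', hg's, hk⟩ := exists_tail_enum (r := (· > ·)) hg hgs hM
      fun x hx y hy z hxz hzy => hMc.out hy hx ⟨hzy.le, hxz.le⟩
    refine ⟨_, Or.inr <| Or.inr <| Or.inl ⟨g', hg', hg's, b, fun n hn => ?_, rfl⟩⟩
    obtain ⟨k, hnk, hgk⟩ := hk n
    show lab' (g' n : ι) = b
    rw [hlab _ ⟨not_isMin_of_lt (hg' n (n + 1) n.lt_succ_self), not_isMax_of_lt (hg' 0 n hn)⟩,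
      hgk]
    exact hb k (by omega)
  · obtain ⟨D, hD, hends⟩ :
        ∃ D, IsEtaFamilyOn (· < ·) lab D P ∧ ∀ x ∉ D, IsBot x ∨ IsTop x := by
      rcases hη with ⟨hD, -⟩ | ⟨x₀, hx₀, hD, -⟩ | ⟨x₁, hx₁, hD, -⟩ |
        ⟨x₀, x₁, -, hx₀, hx₁, hD, -⟩
      · exact ⟨_, hD, fun x hx => absurd trivial hx⟩
      · exact ⟨_, hD, fun x hx => Or.inl (not_not.1 hx ▸ isBot_of_forall_ne_lt hx₀)⟩
      · exact ⟨_, hD, fun x hx => Or.inr (not_not.1 hx ▸ isTop_of_forall_ne_lt hx₁)⟩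
      · refine ⟨_, hD, fun x hx => ?_⟩
        rcases not_and_or.1 hx with hx | hx
        exacts [Or.inl (not_not.1 hx ▸ isBot_of_forall_ne_lt hx₀),
          Or.inr (not_not.1 hx ▸ isTop_of_forall_ne_lt hx₁)]
    rw [hD.eq_nonExtremal hends] at hD
    exact exists_of_isEtaFamilyOn mul tau taustar kappa hP (hD.subtype_nonExtremal hP hM hMc hlab)

theorem Pi0HatRel.exists_restrict {r : ι → ι → Prop} [IsStrictTotalOrder ι r] {lab lab' : ι → S}
    {v : S} (h : Pi0HatRel mul tau taustar kappa r lab v) {M : Set ι} (hM : M.Nonempty)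
    (hMc : ∀ x ∈ M, ∀ y ∈ M, ∀ z, r x z → r z y → z ∈ M)
    (hlab : ∀ z : M, (∃ x : M, r x z) → (∃ y : M, r z y) → lab' z = lab z) :
    ∃ v', Pi0HatRel mul tau taustar kappa (fun a b : M => r a b) (fun z : M => lab' z) v' := by
  classical
  let _ : LinearOrder ι := linearOrderOfSTO r
  rcases M.finite_or_infinite with hfin | hinf
  · have : Finite M := hfin.to_subtype
    have : Nonempty M := hM.to_subtype
    exact exists_of_finite mul tau taustar kappa _
  exact h.exists_restrict_of_infinite hinf
    (Set.ordConnected_of_Ioo fun x hx y hy _ z hz => hMc x hx y hy z hz.1 hz.2)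
    fun z hz => hlab z (not_isMin_iff.1 hz.1) (not_isMax_iff.1 hz.2)

end Restrict

section SetLT

variable {α : Type} [LinearOrder α]

theorem setLT_or_setLT {A B : Set α} (hA : ConvexIn Set.univ A) (hB : ConvexIn Set.univ B)
    (hAB : Disjoint A B) : SetLT A B ∨ SetLT B A := by
  by_contra! h
  obtain ⟨⟨x, hx, y, hy, hyx⟩, ⟨b, hb, a, ha, hab⟩⟩ :
      (∃ x ∈ A, ∃ y ∈ B, y ≤ x) ∧ ∃ b ∈ B, ∃ a ∈ A, a ≤ b := by
    simpa [SetLT] using h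
  have hne : ∀ {p q}, p ∈ A → q ∈ B → p ≠ q := fun hp hq e =>
    Set.disjoint_left.1 hAB hp (e ▸ hq)
  rcases lt_trichotomy x b with hxb | rfl | hbx
  · exact hne hx (hB y hy b hb x trivial (hyx.lt_of_ne (hne hx hy).symm) hxb) rfl
  · exact hne hx hb rfl
  · exact hne (hA a ha x hx b trivial (hab.lt_of_ne (hne ha hb)) hbx) hb rfl

theorem isStrictTotalOrder_setLT {ι : Type} (F : ι → Set α) (hne : ∀ i, (F i).Nonempty)
    (hconv : ∀ i, ConvexIn Set.univ (F i)) (hdisj : ∀ i j, i ≠ j → Disjoint (F i) (F j)) :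
    IsStrictTotalOrder ι fun i j => SetLT (F i) (F j) where
  trichotomous i j hij hji := by
    by_contra hne'
    exact (setLT_or_setLT (hconv i) (hconv j) (hdisj i j hne')).elim hij hji
  irrefl i h := by
    obtain ⟨x, hx⟩ := hne i
    exact lt_irrefl x (h x hx x hx)
  trans i j k hij hjk x hx z hz := by
    obtain ⟨y, hy⟩ := hne j
    exact (hij x hx y hy).trans (hjk y hy z hz)

theorem ConvexIn.subset_of_setLT_of_setLT {I C C₁ C₂ : Set α} (hconv : ConvexIn Set.univ I)
    (h₁ : (I ∩ C₁).Nonempty) (h₂ : (I ∩ C₂).Nonempty) (hlt₁ : SetLT C₁ C) (hlt₂ : SetLT C C₂) :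
    C ⊆ I := by
  obtain ⟨x, hx⟩ := h₁
  obtain ⟨y, hy⟩ := h₂
  exact fun z hz => hconv x hx.1 y hy.1 z trivial (hlt₁ x hx.2 z hz) (hlt₂ z hz y hy.2)

end SetLT

namespace IsCondTreeOn

variable {α : Type} [LinearOrder α] {R : Set α} {T : Set (Set α)}

theorem subset_or_subset_of_mem (hT : IsCondTreeOn R T) {J J' : Set α} (hJ : J ∈ T)
    (hJ' : J' ∈ T) {x : α} (hx : x ∈ J) (hx' : x ∈ J') : J ⊆ J' ∨ J' ⊆ J :=
  (hT.comparable_or_disjoint J hJ J' hJ').imp_right fun h =>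
    h.resolve_right fun hd => (hd ▸ Set.mem_inter hx hx' : x ∈ (∅ : Set α))

theorem exists_child_superset (hT : IsCondTreeOn R T) {J' J : Set α} (hJ' : J' ∈ T)
    (hJ : J ∈ T) (hss : J' ⊂ J) : ∃ C, IsChildOf T C J ∧ J' ⊆ C := by
  obtain ⟨x, hx⟩ := hT.mem_nonempty J' hJ'
  set A := {K | K ∈ T ∧ J' ⊆ K ∧ K ⊂ J}
  have hA : IsChain (· ⊆ ·) A := fun K hK K' hK' _ =>
    hT.subset_or_subset_of_mem hK.1 hK'.1 (hK.2.1 hx) (hK'.2.1 hx)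
  obtain ⟨C, hC, hCmax⟩ :=
    (hT.chains_finite A (fun K hK => hK.1) hA).exists_maximal ⟨J', hJ', subset_rfl, hss⟩
  refine ⟨C, ⟨hC.1, hC.2.2, fun K hK hCK => ?_⟩, hC.2.1⟩
  rcases hT.subset_or_subset_of_mem hK hJ (hCK.1 (hC.2.1 hx)) (hss.1 hx) with hKJ | hJK
  · rcases hKJ.eq_or_ssubset with rfl | hKJ
    · exact subset_rfl
    · exact absurd (hCmax ⟨hK, hC.2.1.trans hCK.1, hKJ⟩ hCK.1) hCK.2
  · exact hJK

theorem exists_child_mem (hT : IsCondTreeOn R T) {J : Set α} (hJ : J ∈ T)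
    (hleaf : ¬IsLeafOf T J) {x : α} (hx : x ∈ J) : ∃ C, IsChildOf T C J ∧ x ∈ C := by
  obtain ⟨J', hJ', hJ'J, hne⟩ : ∃ J' ∈ T, J' ⊆ J ∧ J' ≠ J := by
    simpa [IsLeafOf, hJ] using hleaf
  have hU : ⋃₀ {K | K ∈ T ∧ K ⊂ J} = J := (hT.children_union J hJ).resolve_right fun h =>
    (hT.mem_nonempty J' hJ').ne_empty (Set.sUnion_eq_empty.1 h J' ⟨hJ', hJ'J.ssubset_of_ne hne⟩)
  obtain ⟨K, ⟨hK, hKJ⟩, hxK⟩ := hU ▸ hx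
  obtain ⟨C, hC, hKC⟩ := hT.exists_child_superset hK hJ hKJ
  exact ⟨C, hC, hKC hxK⟩

theorem child_eq_of_mem (hT : IsCondTreeOn R T) {J C C' : Set α} (hC : IsChildOf T C J)
    (hC' : IsChildOf T C' J) {x : α} (hx : x ∈ C) (hx' : x ∈ C') : C = C' := by
  by_contra hne
  rcases hT.subset_or_subset_of_mem hC.1 hC'.1 hx hx' with h | h
  · exact hC'.2.1.2 (hC.2.2 C' hC'.1 (h.ssubset_of_ne hne))
  · exact hC.2.1.2 (hC'.2.2 C hC.1 (h.ssubset_of_ne (Ne.symm hne)))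

theorem disjoint_of_child (hT : IsCondTreeOn R T) {J C C' : Set α} (hC : IsChildOf T C J)
    (hC' : IsChildOf T C' J) (hne : C ≠ C') : Disjoint C C' :=
  Set.disjoint_left.2 fun _ hx hx' => hne (hT.child_eq_of_mem hC hC' hx hx')

theorem isStrictTotalOrder_children (hT : IsCondTreeOn Set.univ T) (J : Set α) :
    IsStrictTotalOrder {C // IsChildOf T C J} fun A B => SetLT A.1 B.1 :=
  isStrictTotalOrder_setLT Subtype.val (fun C => hT.mem_nonempty _ C.2.1)
    (fun C => hT.mem_convex _ C.2.1) fun C C' hne =>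
      hT.disjoint_of_child C.2 C'.2 (Subtype.val_injective.ne hne)

theorem wellFounded_ssubset (hT : IsCondTreeOn R T) :
    WellFounded fun K' K : Set α => K' ∈ T ∧ K' ⊂ K := by
  refine wellFounded_iff_isEmpty_descending_chain.2 ⟨fun ⟨f, hf⟩ => ?_⟩
  have hanti : StrictAnti fun n => f (n + 1) :=
    strictAnti_nat_of_succ_lt fun n => (hf (n + 1)).2
  exact Set.infinite_range_of_injective hanti.injective <|
    hT.chains_finite _ (Set.range_subset_iff.2 fun n => (hf n).1) hanti.antitone.isChain_range

end IsCondTreeOn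

section RestrictTree

variable {α : Type} {T : Set (Set α)} {I K : Set α}

theorem nonempty_of_mem_restrictTree (hK : K ∈ restrictTree T I) : K.Nonempty := by
  obtain ⟨J, -, rfl, hne⟩ := hK
  exact hne

theorem subset_of_mem_restrictTree (hK : K ∈ restrictTree T I) : K ⊆ I := by
  obtain ⟨J, -, rfl, -⟩ := hK
  exact Set.inter_subset_left

theorem isLeast_self_of_subset (hKT : K ∈ T) (hKI : K ⊆ I) : IsLeast {J ∈ T | I ∩ J = K} K :=
  ⟨⟨hKT, Set.inter_eq_self_of_subset_right hKI⟩, fun _ hJ => hJ.2 ▸ Set.inter_subset_right⟩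

theorem inter_ssubset_of_isLeast {J J' : Set α} (hJ : IsLeast {J ∈ T | I ∩ J = K} J)
    (hJ' : J' ∈ T) (hss : J' ⊂ J) : I ∩ J' ⊂ K :=
  (hJ.1.2 ▸ Set.inter_subset_inter_right I hss.1 : I ∩ J' ⊆ K).ssubset_of_ne fun h =>
    hss.2 (hJ.2 ⟨hJ', h⟩)

namespace IsCondTreeOn

variable [LinearOrder α]

theorem exists_isLeast_origin (hT : IsCondTreeOn Set.univ T) (hK : K ∈ restrictTree T I) :
    ∃ J, IsLeast {J ∈ T | I ∩ J = K} J := by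
  obtain ⟨x, hx⟩ := nonempty_of_mem_restrictTree hK
  obtain ⟨J₀, hJ₀, rfl, -⟩ := hK
  set A := {J ∈ T | I ∩ J = I ∩ J₀}
  have hA : IsChain (· ⊆ ·) A := fun J hJ J' hJ' _ =>
    hT.subset_or_subset_of_mem hJ.1 hJ'.1 (hJ.2.superset hx).2 (hJ'.2.superset hx).2
  obtain ⟨J, hJ⟩ := (hT.chains_finite A (fun J hJ => hJ.1) hA).exists_minimal ⟨J₀, hJ₀, rfl⟩
  exact ⟨J, hJ.1, fun J' hJ' => (hA.total hJ.1 hJ').elim id (hJ.2 hJ')⟩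

theorem isLeafOf_restrictTree_iff (hT : IsCondTreeOn Set.univ T) (hK : K ∈ restrictTree T I)
    {J : Set α} (hJ : IsLeast {J ∈ T | I ∩ J = K} J) :
    IsLeafOf (restrictTree T I) K ↔ IsLeafOf T J := by
  refine ⟨fun hleaf => by_contra fun hJleaf => ?_, fun hleaf => ⟨hK, fun K' hK' hK'K => ?_⟩⟩
  · obtain ⟨x, hx⟩ := nonempty_of_mem_restrictTree hK
    have hxJ : x ∈ I ∩ J := hJ.1.2.superset hx
    obtain ⟨C, hC, hxC⟩ := hT.exists_child_mem hJ.1.1 hJleaf hxJ.2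
    have hCK := inter_ssubset_of_isLeast hJ hC.1 hC.2.1
    exact hCK.ne (hleaf.2 _ ⟨C, hC.1, rfl, x, hxJ.1, hxC⟩ hCK.subset)
  · obtain ⟨J', hJ', rfl, x, hxI, hxJ'⟩ := hK'
    have hxJ : x ∈ J := (hJ.1.2.superset (hK'K ⟨hxI, hxJ'⟩)).2
    rcases hT.subset_or_subset_of_mem hJ' hJ.1.1 hxJ' hxJ with h | h
    · rw [hleaf.2 J' hJ' h, hJ.1.2]
    · exact hK'K.antisymm (hJ.1.2 ▸ Set.inter_subset_inter_right I h)

theorem restrict (hT : IsCondTreeOn Set.univ T) (hne : I.Nonempty) :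
    IsCondTreeOn I (restrictTree T I) := by
  refine ⟨⟨Set.univ, hT.root_mem, by simp, by simpa using hne⟩,
    fun K => subset_of_mem_restrictTree, fun K => nonempty_of_mem_restrictTree, ?_, ?_, ?_, ?_⟩
  · rintro _ ⟨J, hJ, rfl, -⟩ x hx y hy z hz hxz hzy
    exact ⟨hz, hT.mem_convex J hJ x hx.2 y hy.2 z trivial hxz hzy⟩
  · rintro _ ⟨J, hJ, rfl, -⟩ _ ⟨J', hJ', rfl, -⟩
    rcases hT.comparable_or_disjoint J hJ J' hJ' with h | h | h
    · exact Or.inl (Set.inter_subset_inter_right I h)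
    · exact Or.inr (Or.inl (Set.inter_subset_inter_right I h))
    · exact Or.inr (Or.inr (by rw [Set.inter_inter_inter_comm, h, Set.inter_empty]))
  · intro K hK
    obtain ⟨J, hJ⟩ := hT.exists_isLeast_origin hK
    by_cases hleaf : IsLeafOf T J
    · have hKleaf := (hT.isLeafOf_restrictTree_iff hK hJ).2 hleaf
      exact Or.inr (Set.sUnion_eq_empty.2 fun K' hK' =>
        absurd (hKleaf.2 K' hK'.1 hK'.2.1) hK'.2.ne)
    · refine Or.inl ((Set.sUnion_subset fun K' hK' => hK'.2.1).antisymm fun x hx => ?_)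
      have hxJ : x ∈ I ∩ J := hJ.1.2.superset hx
      obtain ⟨C, hC, hxC⟩ := hT.exists_child_mem hJ.1.1 hleaf hxJ.2
      exact ⟨I ∩ C, ⟨⟨C, hC.1, rfl, x, hxJ.1, hxC⟩, inter_ssubset_of_isLeast hJ hC.1 hC.2.1⟩,
        hxJ.1, hxC⟩
  · intro C hCT hC
    have hA : IsChain (· ⊆ ·) {J ∈ T | I ∩ J ∈ C} := fun J hJ J' hJ' _ => by
      obtain ⟨x, hx, hx'⟩ : ∃ x ∈ I ∩ J, x ∈ I ∩ J' := by
        rcases hC.total hJ.2 hJ'.2 with h | h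
        · obtain ⟨x, hx⟩ := nonempty_of_mem_restrictTree (hCT hJ.2)
          exact ⟨x, hx, h hx⟩
        · obtain ⟨x, hx⟩ := nonempty_of_mem_restrictTree (hCT hJ'.2)
          exact ⟨x, h hx, hx⟩
      exact hT.subset_or_subset_of_mem hJ.1 hJ'.1 hx.2 hx'.2
    refine ((hT.chains_finite _ (fun J hJ => hJ.1) hA).image (I ∩ ·)).subset fun K hK => ?_
    obtain ⟨J, hJ, rfl, -⟩ := hCT hK
    exact ⟨J, ⟨hJ, hK⟩, rfl⟩

theorem isChildOf_restrictTree_iff (hT : IsCondTreeOn Set.univ T) {J : Set α}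
    (hJ : IsLeast {J ∈ T | I ∩ J = K} J) {K' : Set α} :
    IsChildOf (restrictTree T I) K' K ↔ ∃ C, IsChildOf T C J ∧ (I ∩ C).Nonempty ∧ K' = I ∩ C := by
  constructor
  · rintro ⟨⟨L, hL, rfl, x, hxI, hxL⟩, hss, hmax⟩
    have hxJ : x ∈ J := (hJ.1.2.superset (hss.1 ⟨hxI, hxL⟩)).2
    have hLJ : L ⊂ J := by
      rcases hT.subset_or_subset_of_mem hL hJ.1.1 hxL hxJ with h | h
      · exact h.ssubset_of_ne (by rintro rfl; exact hss.ne hJ.1.2)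
      · exact absurd (hJ.1.2 ▸ Set.inter_subset_inter_right I h) hss.2
    obtain ⟨C, hC, hLC⟩ := hT.exists_child_superset hL hJ.1.1 hLJ
    have hCK := inter_ssubset_of_isLeast hJ hC.1 hC.2.1
    refine ⟨C, hC, ⟨x, hxI, hLC hxL⟩, by_contra fun hne => hCK.2 (hmax _ ?_ ?_)⟩
    · exact ⟨C, hC.1, rfl, x, hxI, hLC hxL⟩
    · exact (Set.inter_subset_inter_right I hLC).ssubset_of_ne hne
  · rintro ⟨C, hC, hCne, rfl⟩
    refine ⟨⟨C, hC.1, rfl, hCne⟩, inter_ssubset_of_isLeast hJ hC.1 hC.2.1, ?_⟩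
    rintro _ ⟨L, hL, rfl, -⟩ hss
    obtain ⟨x, hx⟩ := hCne
    rcases hT.subset_or_subset_of_mem hL hC.1 (hss.1 hx).2 hx.2 with h | h
    · exact absurd (Set.inter_subset_inter_right I h) hss.2
    · rcases h.eq_or_ssubset with rfl | h
      · exact absurd subset_rfl hss.2
      · exact hJ.1.2 ▸ Set.inter_subset_inter_right I (hC.2.2 L hL h)

theorem isChildOf_restrictTree_iff_of_subset (hT : IsCondTreeOn Set.univ T) (hKT : K ∈ T)
    (hKI : K ⊆ I) {C : Set α} : IsChildOf (restrictTree T I) C K ↔ IsChildOf T C K := by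
  have htrace : ∀ {C}, IsChildOf T C K → I ∩ C = C := fun hC =>
    Set.inter_eq_self_of_subset_right (hC.2.1.1.trans hKI)
  rw [hT.isChildOf_restrictTree_iff (isLeast_self_of_subset hKT hKI)]
  constructor
  · rintro ⟨C', hC', -, rfl⟩
    rwa [htrace hC']
  · intro hC
    exact ⟨C, hC, (htrace hC).symm ▸ hT.mem_nonempty C hC.1, (htrace hC).symm⟩

theorem exists_equiv_children (hT : IsCondTreeOn Set.univ T) {J : Set α}
    (hJ : IsLeast {J ∈ T | I ∩ J = K} J) :
    ∃ e : {C : {C // IsChildOf T C J} | (I ∩ C.1).Nonempty} ≃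
      {K' // IsChildOf (restrictTree T I) K' K}, ∀ C, (e C).1 = I ∩ C.1.1 := by
  refine ⟨Equiv.ofBijective (fun C => ⟨I ∩ C.1.1,
    (hT.isChildOf_restrictTree_iff hJ).2 ⟨_, C.1.2, C.2, rfl⟩⟩) ⟨fun C C' hCC' => ?_, fun K' => ?_⟩,
    fun _ => rfl⟩
  · obtain ⟨x, hx⟩ := C.2
    have hCC' : I ∩ C.1.1 = I ∩ C'.1.1 := congrArg Subtype.val hCC'
    have hx' := hCC' ▸ hx
    exact Subtype.ext (Subtype.ext (hT.child_eq_of_mem C.1.2 C'.1.2 hx.2 hx'.2))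
  · obtain ⟨C, hC, hCne, hK'⟩ := (hT.isChildOf_restrictTree_iff hJ).1 K'.2
    exact ⟨⟨⟨C, hC⟩, hCne⟩, Subtype.ext hK'.symm⟩

theorem setLT_inter_iff (hT : IsCondTreeOn Set.univ T) {J C C' : Set α}
    (hC : IsChildOf T C J) (hC' : IsChildOf T C' J) (h : (I ∩ C).Nonempty)
    (h' : (I ∩ C').Nonempty) : SetLT (I ∩ C) (I ∩ C') ↔ SetLT C C' := by
  refine ⟨fun hlt => ?_, fun hlt x hx y hy => hlt x hx.2 y hy.2⟩
  obtain ⟨x, hx⟩ := h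
  obtain ⟨y, hy⟩ := h'
  have hne : C ≠ C' := by
    rintro rfl
    exact lt_irrefl x (hlt x hx x hx)
  exact (setLT_or_setLT (hT.mem_convex C hC.1) (hT.mem_convex C' hC'.1)
    (hT.disjoint_of_child hC hC' hne)).resolve_right fun hlt' =>
      lt_irrefl x ((hlt x hx y hy).trans (hlt' y hy.2 x hx.2))

end IsCondTreeOn

end RestrictTree

section Label

variable {S α : Type} [Nonempty S] [LinearOrder α] (mul : S → S → S) (tau taustar : S → S)
  (kappa : Set S → S) (T : Set (Set α)) (γ : Set α → S) (I : Set α)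
  (hwf : WellFounded fun K' K : Set α => K' ∈ restrictTree T I ∧ K' ⊂ K)

open Classical in
noncomputable def restrictLabel : Set α → S :=
  hwf.fix fun K rec => if K ∈ T ∧ K ⊆ I then γ K else
    Classical.epsilon fun v => Pi0HatRel mul tau taustar kappa
      (fun A B : {C // IsChildOf (restrictTree T I) C K} => SetLT A.1 B.1)
      (fun A => rec A.1 ⟨A.2.1, A.2.2.1⟩) v

variable {mul tau taustar kappa T γ I hwf}

theorem restrictLabel_of_mem {K : Set α} (hKT : K ∈ T) (hKI : K ⊆ I) :
    restrictLabel mul tau taustar kappa T γ I hwf K = γ K := by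
  rw [restrictLabel, WellFounded.fix_eq, if_pos ⟨hKT, hKI⟩]

theorem restrictLabel_spec {K : Set α} (hK : ¬(K ∈ T ∧ K ⊆ I))
    (h : ∃ v, Pi0HatRel mul tau taustar kappa
      (fun A B : {C // IsChildOf (restrictTree T I) C K} => SetLT A.1 B.1)
      (fun A => restrictLabel mul tau taustar kappa T γ I hwf A.1) v) :
    Pi0HatRel mul tau taustar kappa
      (fun A B : {C // IsChildOf (restrictTree T I) C K} => SetLT A.1 B.1)
      (fun A => restrictLabel mul tau taustar kappa T γ I hwf A.1)
      (restrictLabel mul tau taustar kappa T γ I hwf K) := by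
  rw [restrictLabel, WellFounded.fix_eq, if_neg hK]
  exact Classical.epsilon_spec h

end Label

namespace IsEvalTreeHat

variable {S α : Type} [LinearOrder α] {mul : S → S → S} {tau taustar : S → S}
  {kappa : Set S → S} {u : α → S} {T : Set (Set α)} {γ γI : Set α → S} {I K : Set α}

theorem leaf_restrict (h : IsEvalTreeHat mul tau taustar kappa u Set.univ T γ)
    (hagree : ∀ J ∈ T, J ⊆ I → γI J = γ J) (hK : IsLeafOf (restrictTree T I) K) :
    ∃ x, K = {x} ∧ γI K = u x := by
  obtain ⟨J, hJ⟩ := h.tree.exists_isLeast_origin hK.1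
  obtain ⟨x, rfl, hx⟩ := h.leaf_spec J ((h.tree.isLeafOf_restrictTree_iff hK.1 hJ).1 hK)
  obtain ⟨y, hyI, rfl⟩ := hJ.1.2 ▸ nonempty_of_mem_restrictTree hK.1
  obtain rfl : K = {y} :=
    hJ.1.2.symm.trans (Set.inter_eq_right.2 (Set.singleton_subset_iff.2 hyI))
  exact ⟨y, rfl, (hagree _ hJ.1.1 (Set.singleton_subset_iff.2 hyI)).trans hx⟩

theorem pi0HatRel_restrict_of_subset (h : IsEvalTreeHat mul tau taustar kappa u Set.univ T γ)
    (hagree : ∀ J ∈ T, J ⊆ I → γI J = γ J) (hKT : K ∈ T) (hKI : K ⊆ I)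
    (hleaf : ¬IsLeafOf (restrictTree T I) K) :
    Pi0HatRel mul tau taustar kappa
      (fun A B : {C // IsChildOf (restrictTree T I) C K} => SetLT A.1 B.1) (fun A => γI A.1)
      (γ K) := by
  have hKK : I ∩ K = K := Set.inter_eq_self_of_subset_right hKI
  have hK : K ∈ restrictTree T I := ⟨K, hKT, hKK.symm, hKK.symm ▸ h.tree.mem_nonempty K hKT⟩
  have hKleaf : ¬IsLeafOf T K :=
    mt (h.tree.isLeafOf_restrictTree_iff hK (isLeast_self_of_subset hKT hKI)).2 hleaf
  exact (h.node_spec K hKT hKleaf).of_equiv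
    (Equiv.subtypeEquivRight fun _ => (h.tree.isChildOf_restrictTree_iff_of_subset hKT hKI).symm)
    (fun _ _ => Iff.rfl) fun A => (hagree A.1 A.2.1 (A.2.2.1.1.trans hKI)).symm

theorem exists_pi0HatRel_restrict (h : IsEvalTreeHat mul tau taustar kappa u Set.univ T γ)
    (hconv : ConvexIn Set.univ I) (hagree : ∀ J ∈ T, J ⊆ I → γI J = γ J)
    (hK : K ∈ restrictTree T I) (hleaf : ¬IsLeafOf (restrictTree T I) K) :
    ∃ v, Pi0HatRel mul tau taustar kappa
      (fun A B : {C // IsChildOf (restrictTree T I) C K} => SetLT A.1 B.1) (fun A => γI A.1) v := by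
  obtain ⟨J, hJ⟩ := h.tree.exists_isLeast_origin hK
  have hJleaf : ¬IsLeafOf T J := mt (h.tree.isLeafOf_restrictTree_iff hK hJ).2 hleaf
  have := h.tree.isStrictTotalOrder_children J
  set M : Set {C // IsChildOf T C J} := {C | (I ∩ C.1).Nonempty}
  have hM : M.Nonempty := by
    obtain ⟨x, hx⟩ := nonempty_of_mem_restrictTree hK
    have hxJ : x ∈ I ∩ J := hJ.1.2.superset hx
    obtain ⟨C, hC, hxC⟩ := h.tree.exists_child_mem hJ.1.1 hJleaf hxJ.2
    exact ⟨⟨C, hC⟩, x, hxJ.1, hxC⟩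
  have hsub : ∀ C₁ ∈ M, ∀ C₂ ∈ M, ∀ C : {C // IsChildOf T C J}, SetLT C₁.1 C.1 →
      SetLT C.1 C₂.1 → C.1 ⊆ I := fun _ h₁ _ h₂ _ hlt₁ hlt₂ =>
    hconv.subset_of_setLT_of_setLT h₁ h₂ hlt₁ hlt₂
  have hlab : ∀ C : M, (∃ C₁ : M, SetLT C₁.1.1 C.1.1) → (∃ C₂ : M, SetLT C.1.1 C₂.1.1) →
      γI (I ∩ C.1.1) = γ C.1.1 := fun C ⟨C₁, hC₁⟩ ⟨C₂, hC₂⟩ => by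
    have hCI := hsub C₁ C₁.2 C₂ C₂.2 C hC₁ hC₂
    rw [Set.inter_eq_self_of_subset_right hCI]
    exact hagree _ C.1.2.1 hCI
  obtain ⟨v, hv⟩ := (h.node_spec J hJ.1.1 hJleaf).exists_restrict
    (lab' := fun C => γI (I ∩ C.1)) hM (fun C₁ h₁ C₂ h₂ C hlt₁ hlt₂ =>
      (h.tree.mem_nonempty C.1 C.2.1).mono fun _ hx => ⟨hsub C₁ h₁ C₂ h₂ C hlt₁ hlt₂ hx, hx⟩) hlab
  obtain ⟨e, he⟩ := h.tree.exists_equiv_children hJ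
  refine ⟨v, hv.of_equiv e (fun C C' => ?_) fun C => by rw [he]⟩
  rw [he, he]
  exact (h.tree.setLT_inter_iff C.1.2 C'.1.2 C.2 C'.2).symm

end IsEvalTreeHat

theorem restrict_evaluation_tree_general {S α : Type} [LinearOrder α]
    (mul : S → S → S) (tau taustar : S → S)
    (kappa : Set S → S) (u : α → S) (T : Set (Set α)) (γ : Set α → S)
    (h : IsEvalTreeHat mul tau taustar kappa u Set.univ T γ)
    (I : Set α) (hne : I.Nonempty) (hconv : ConvexIn Set.univ I) :
    ∃ γI : Set α → S,
      IsEvalTreeHat mul tau taustar kappa u I (restrictTree T I) γI ∧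
      ∀ J ∈ T, J ⊆ I → γI J = γ J := by
  have : Nonempty S := ⟨u hne.some⟩
  have hT := h.tree.restrict hne
  set γI := restrictLabel mul tau taustar kappa T γ I hT.wellFounded_ssubset
  have hagree : ∀ J ∈ T, J ⊆ I → γI J = γ J := fun J hJ hJI => restrictLabel_of_mem hJ hJI
  refine ⟨γI, ⟨hT, fun K hK => h.leaf_restrict hagree hK, fun K hK hleaf => ?_⟩, hagree⟩
  by_cases hA : K ∈ T ∧ K ⊆ I
  · rw [hagree K hA.1 hA.2]
    exact h.pi0HatRel_restrict_of_subset hagree hA.1 hA.2 hleaf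
  · exact restrictLabel_spec hA (h.exists_pi0HatRel_restrict hconv hagree hK hleaf)

/-- restriction of evaluation trees.  Let `S` be a finite set
with operations `·, τ, τ*, κ`, let `(T, γ)` be an evaluation tree with respect
to the extended map `π₀^` over a nonempty countable word `u : α → S`, and let
`I` be a nonempty convex subset of `α`.  Then there is `γI` such that
`(T|_I, γI)` is an evaluation tree with respect to `π₀^` over the factor
`u|_I` and `γI` agrees with `γ` on every `J ∈ T` with `J ⊆ I`. -/
theorem restrict_evaluation_tree {S α : Type} [Finite S] [LinearOrder α]
    [Countable α] [Nonempty α] (mul : S → S → S) (tau taustar : S → S)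
    (kappa : Set S → S) (u : α → S) (T : Set (Set α)) (γ : Set α → S)
    (h : IsEvalTreeHat mul tau taustar kappa u Set.univ T γ)
    (I : Set α) (hne : I.Nonempty) (hconv : ConvexIn Set.univ I) :
    ∃ γI : Set α → S,
      IsEvalTreeHat mul tau taustar kappa u I (restrictTree T I) γI ∧
      ∀ J ∈ T, J ⊆ I → γI J = γ J :=
  restrict_evaluation_tree_general mul tau taustar kappa u T γ h I hne hconv
end
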